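/- arXiv:1204.0023 — 7 statements merged into one kernel-verified Lean document; each statement's English description precedes it below -/
import Mathlib

section
/- Let k ≥ 3 and let A be an invertible k×k real matrix. If trace(A⁻¹) = 1 and trace(Aⁱ) = 1 for all i = 1, 2, …, k−2, then trace(A^{k−1}) ≠ 1. -/
open Polynomial Matrix Finset

lemma eval_charpoly' {n : ℕ} (M : Matrix (Fin n) (Fin n) ℂ) (x : ℂ) :
    (M.charpoly).eval x = (Matrix.scalar (Fin n) x - M).det := by
  rw [Matrix.charpoly, eval_det, matPolyEquiv_charmatrix]
  simp

lemma trace_map' {k : ℕ} (M : Matrix (Fin k) (Fin k) ℝ) :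
    (M.map (algebraMap ℝ ℂ)).trace = algebraMap ℝ ℂ M.trace := by
  simp [Matrix.trace, Matrix.map_apply]

lemma charpoly_pow_roots {k : ℕ} (B : Matrix (Fin k) (Fin k) ℂ) (n : ℕ) (hn : 1 ≤ n) :
    (B ^ n).charpoly = ((B.charpoly.roots.map (fun l => l ^ n)).map (fun r => X - C r)).prod := by
  have hcard : Multiset.card B.charpoly.roots = k := by
    rw [(splits_iff_card_roots.mp (IsAlgClosed.splits _)), charpoly_natDegree_eq_dim]
    simp
  apply Polynomial.funext
  intro x
  set σ := B.charpoly.roots with hσ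
  -- RHS
  have hRHS : (((σ.map (fun l => l ^ n)).map (fun r => X - C r)).prod).eval x
      = ((σ.map (fun t => x - t ^ n))).prod := by
    rw [eval_multiset_prod, Multiset.map_map, Multiset.map_map]
    simp
  rw [hRHS]
  -- LHS
  set p : ℂ[X] := X ^ n - C x with hp
  have hpm : p.Monic := monic_X_pow_sub_C x (by omega)
  have hpdeg : p.natDegree = n := natDegree_X_pow_sub_C
  have hpcard : Multiset.card p.roots = n := by
    rw [splits_iff_card_roots.mp (IsAlgClosed.splits _), hpdeg]
  have hpprod : p = (p.roots.map (fun a => X - C a)).prod :=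
    ((IsAlgClosed.splits p).eq_prod_roots_of_monic hpm)
  have haev : (aeval B) p = B ^ n - Matrix.scalar (Fin k) x := by
    simp [hp, Matrix.scalar]
    rfl
  -- det of B - scalar a
  have hdet : ∀ a : ℂ, (B - Matrix.scalar (Fin k) a).det
      = (-1)^k * (σ.map (fun t => a - t)).prod := by
    intro a
    rw [show B - Matrix.scalar (Fin k) a = -(Matrix.scalar (Fin k) a - B) by rw [neg_sub],
      Matrix.det_neg, ← eval_charpoly']
    congr 1
    · simp
    conv_lhs => rw [((IsAlgClosed.splits B.charpoly).eq_prod_roots_of_monic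
        B.charpoly_monic)]
    rw [eval_multiset_prod, Multiset.map_map]
    simp
    rfl
  -- main computation
  have hmain : (B ^ n - Matrix.scalar (Fin k) x).det
      = (p.roots.map (fun a => (B - Matrix.scalar (Fin k) a).det)).prod := by
    rw [← haev]
    conv_lhs => rw [hpprod]
    have hld : ∀ (L : List (Matrix (Fin k) (Fin k) ℂ)), L.prod.det = (L.map Matrix.det).prod := by
      intro L
      simpa using map_list_prod (Matrix.detMonoidHom) L
    rw [← p.roots.coe_toList, Multiset.map_coe, Multiset.prod_coe, map_list_prod (aeval B),
      hld, Multiset.map_coe, Multiset.prod_coe, List.map_map, List.map_map]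
    congr 1
    apply List.map_congr_left
    intro a _
    simp [Matrix.algebraMap_eq_diagonal]
    rfl
  -- combine
  rw [eval_charpoly']
  rw [show Matrix.scalar (Fin k) x - B ^ n = -(B ^ n - Matrix.scalar (Fin k) x) by rw [neg_sub],
    Matrix.det_neg, hmain]
  simp only [hdet]
  rw [Multiset.prod_map_mul, Multiset.map_const', Multiset.prod_replicate, hpcard]
  -- now: eval LHS-det expr
  have hswap := Multiset.prod_map_prod_map p.roots σ (f := fun a t => a - t)
  rw [hswap]
  simp only [Fintype.card_fin]
  have hinner : ∀ t : ℂ, (p.roots.map (fun a => a - t)).prod = (-1)^n * (t ^ n - x) := by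
    intro t
    have : (p.roots.map (fun a => a - t)).prod = (p.roots.map (fun a => (-1) * (t - a))).prod := by
      congr 1; apply Multiset.map_congr rfl; intro a _; ring
    rw [this, Multiset.prod_map_mul, Multiset.map_const', Multiset.prod_replicate, hpcard]
    congr 1
    have := hpprod
    have : (p.roots.map (fun a => X - C a)).prod.eval t = p.eval t := by rw [← hpprod]
    rw [eval_multiset_prod, Multiset.map_map] at this
    simpa [hp] using this
  calc ((-1:ℂ))^k * (((-1:ℂ)^k)^n * (σ.map (fun b => (p.roots.map (fun a => a - b)).prod)).prod)
      = (-1:ℂ)^k * (((-1:ℂ)^k)^n * (σ.map (fun t => (-1)^n * (t ^ n - x))).prod) := by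
        rw [Multiset.map_congr rfl (fun t _ => hinner t)]
    _ = (-1:ℂ)^k * (((-1:ℂ)^k)^n * (((-1:ℂ)^n)^k * (σ.map (fun t => t ^ n - x)).prod)) := by
        rw [Multiset.prod_map_mul, Multiset.map_const', Multiset.prod_replicate, hcard]
    _ = (σ.map (fun t => x - t ^ n)).prod := by
        have h1 : (σ.map (fun t => x - t ^ n)).prod
            = ((-1:ℂ))^k * (σ.map (fun t => t ^ n - x)).prod := by
          have h2 : (σ.map (fun t => x - t ^ n)).prod
              = (σ.map (fun t => (-1) * (t ^ n - x))).prod := by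
            exact congrArg _ (Multiset.map_congr rfl (fun t _ => by ring))
          rw [h2, Multiset.prod_map_mul, Multiset.map_const', Multiset.prod_replicate, hcard]
        rw [h1]
        congr 1
        rw [← pow_mul, ← pow_mul, Nat.mul_comm n k, ← mul_assoc, ← pow_add,
          Even.neg_one_pow ⟨k * n, rfl⟩, one_mul]

lemma trace_pow_roots {k : ℕ} (B : Matrix (Fin k) (Fin k) ℂ) (n : ℕ) (hn : 1 ≤ n) :
    (B ^ n).trace = (B.charpoly.roots.map (fun l => l ^ n)).sum := by
  rw [trace_eq_sum_roots_charpoly, charpoly_pow_roots B n hn, roots_multiset_prod_X_sub_C]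

/-- If `A` is an invertible `k × k` real matrix with `k ≥ 3`, `trace(A⁻¹) = 1` and
`trace(Aⁱ) = 1` for `i = 1, …, k − 2`, then `trace(A^(k−1)) ≠ 1`. -/
theorem stmt_0 (k : ℕ) (hk : 3 ≤ k) (A : Matrix (Fin k) (Fin k) ℝ)
    (hA : IsUnit A) (hinv : (A⁻¹).trace = 1)
    (htr : ∀ i : ℕ, 1 ≤ i → i ≤ k - 2 → (A ^ i).trace = 1) :
    (A ^ (k - 1)).trace ≠ 1 := by
  intro hcontra
  classical
  have hAdet : IsUnit A.det := (Matrix.isUnit_iff_isUnit_det A).mp hA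
  have htr' : ∀ i : ℕ, 1 ≤ i → i ≤ k - 1 → (A ^ i).trace = 1 := by
    intro i h1 h2
    rcases Nat.lt_or_ge i (k - 1) with h | h
    · exact htr i h1 (by omega)
    · have : i = k - 1 := by omega
      rw [this]; exact hcontra
  set f : ℝ →+* ℂ := algebraMap ℝ ℂ with hf
  set B : Matrix (Fin k) (Fin k) ℂ := f.mapMatrix A with hB
  set σ : Multiset ℂ := B.charpoly.roots with hσ
  have hBdeg : B.charpoly.natDegree = k := by
    rw [charpoly_natDegree_eq_dim]; simp
  have hcard : Multiset.card σ = k := by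
    rw [hσ, splits_iff_card_roots.mp (IsAlgClosed.splits _), hBdeg]
  -- power sums equal 1
  have hP : ∀ n : ℕ, 1 ≤ n → n ≤ k - 1 → (σ.map (fun l => l ^ n)).sum = 1 := by
    intro n h1 h2
    have e1 : B ^ n = (A ^ n).map f := by
      rw [hB, ← _root_.map_pow]
      rfl
    rw [hσ, ← trace_pow_roots B n h1, e1, _root_.trace_map', htr' n h1 h2, _root_.map_one]
  -- enumeration of roots
  set l : List ℂ := σ.toList with hl
  have hlen : l.length = k := by rw [hl, Multiset.length_toList, hcard]
  set g : Fin k → ℂ := fun i => l.get (Fin.cast hlen.symm i) with hg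
  have huniv : (Finset.univ.val.map g) = σ := by
    have h1 : (Finset.univ : Finset (Fin k)).val = ↑(List.finRange k) := rfl
    rw [h1, Multiset.map_coe]
    have h2 : List.map g (List.finRange k) = l := by
      apply List.ext_get
      · simp [hlen]
      · intro i hi1 hi2
        simp [hg]
    rw [h2, hl, Multiset.coe_toList]
  -- evaluated Newton identities
  have haev_esymm : ∀ m : ℕ, MvPolynomial.aeval g (MvPolynomial.esymm (Fin k) ℂ m) = σ.esymm m := by
    intro m
    rw [MvPolynomial.aeval_esymm_eq_multiset_esymm, huniv]
  have haev_psum : ∀ m : ℕ, MvPolynomial.aeval g (MvPolynomial.psum (Fin k) ℂ m)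
      = (σ.map (fun l => l ^ m)).sum := by
    intro m
    rw [MvPolynomial.psum, map_sum, ← huniv]
    simp only [map_pow, MvPolynomial.aeval_X]
    rw [Multiset.map_map]
    exact (Finset.sum_eq_multiset_sum _ _)
  have newton : ∀ n : ℕ, 0 < n →
      (σ.map (fun l => l ^ n)).sum = (-1) ^ (n + 1) * n * σ.esymm n -
        ∑ a ∈ (antidiagonal n).filter (fun a => a.1 ∈ Set.Ioo 0 n),
          (-1) ^ a.1 * σ.esymm a.1 * (σ.map (fun l => l ^ a.2)).sum := by
    intro n hn
    have := congrArg (MvPolynomial.aeval g) (MvPolynomial.psum_eq_mul_esymm_sub_sum (Fin k) ℂ n hn)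
    rw [haev_psum] at this
    rw [this, map_sub, _root_.map_mul, _root_.map_mul, map_pow, map_neg, _root_.map_one,
      map_natCast, haev_esymm, map_sum]
    congr 1
    apply Finset.sum_congr rfl
    intro a _
    rw [_root_.map_mul, _root_.map_mul, map_pow, map_neg, _root_.map_one, haev_esymm, haev_psum]
  -- esymm values
  have hE : ∀ n : ℕ, 1 ≤ n → n ≤ k - 1 → σ.esymm n = if n = 1 then 1 else 0 := by
    intro n
    induction n using Nat.strong_induction_on with
    | _ n IH =>
      intro h1 h2
      have hnew := newton n (by omega)
      rw [hP n h1 h2] at hnew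
      rcases Nat.eq_or_lt_of_le h1 with h | h
      · -- n = 1
        have hempty : ∑ a ∈ (antidiagonal n).filter (fun a => a.1 ∈ Set.Ioo 0 n),
            (-1 : ℂ) ^ a.1 * σ.esymm a.1 * (σ.map (fun l => l ^ a.2)).sum = 0 := by
          apply Finset.sum_eq_zero
          intro a ha
          rw [Finset.mem_filter, Finset.HasAntidiagonal.mem_antidiagonal, Set.mem_Ioo] at ha
          omega
        rw [hempty, sub_zero, ← h] at hnew
        simp only [← h, if_pos rfl]
        simpa using hnew.symm
      · -- n ≥ 2
        have hsingle : ∑ a ∈ (antidiagonal n).filter (fun a => a.1 ∈ Set.Ioo 0 n),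
            (-1 : ℂ) ^ a.1 * σ.esymm a.1 * (σ.map (fun l => l ^ a.2)).sum = -1 := by
          rw [Finset.sum_eq_single_of_mem (1, n - 1)]
          · have hE1 : σ.esymm 1 = 1 := by
              have := IH 1 (by omega) (le_refl 1) (by omega)
              simpa using this
            rw [hE1, hP (n - 1) (by omega) (by omega)]
            ring
          · rw [Finset.mem_filter, Finset.HasAntidiagonal.mem_antidiagonal, Set.mem_Ioo]
            exact ⟨by omega, by omega, by omega⟩
          · intro b hb hbne
            rw [Finset.mem_filter, Finset.HasAntidiagonal.mem_antidiagonal, Set.mem_Ioo] at hb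
            have hb1 : 2 ≤ b.1 := by
              rcases Nat.lt_or_ge b.1 2 with h' | h'
              · exfalso
                have : b.1 = 1 := by omega
                apply hbne
                have : b = (b.1, b.2) := rfl
                rw [this]
                simp only [Prod.mk.injEq]
                omega
              · exact h'
            have hEb : σ.esymm b.1 = 0 := by
              have := IH b.1 (by omega) (by omega) (by omega)
              rw [this, if_neg (by omega)]
            rw [hEb]
            ring
        rw [hsingle] at hnew
        have hzero : (-1 : ℂ) ^ (n + 1) * n * σ.esymm n = 0 := by linear_combination -hnew
        rw [if_neg (by omega)]
        have hne : (-1 : ℂ) ^ (n + 1) * (n : ℂ) ≠ 0 := by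
          apply mul_ne_zero
          · exact pow_ne_zero _ (by norm_num)
          · exact_mod_cast Nat.cast_ne_zero.mpr (by omega)
        rcases mul_eq_zero.mp hzero with h' | h'
        · exact absurd h' hne
        · exact h'
  -- coefficients of charpoly of B
  have hmonicB : B.charpoly.Monic := Matrix.charpoly_monic B
  have hsplit : B.charpoly.Splits := IsAlgClosed.splits _
  have hcoeffB : ∀ i : ℕ, i ≤ k → B.charpoly.coeff i = (-1) ^ (k - i) * σ.esymm (k - i) := by
    intro i hi
    rw [Polynomial.coeff_eq_esymm_roots_of_splits hsplit (by rw [hBdeg]; exact hi), hBdeg,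
      hmonicB.leadingCoeff, one_mul, hσ]
  have hmap : B.charpoly = A.charpoly.map f := by
    rw [hB]
    exact Matrix.charpoly_map A f
  have hAco : ∀ i : ℕ, f (A.charpoly.coeff i) = B.charpoly.coeff i := by
    intro i
    rw [hmap, Polynomial.coeff_map]
  have finj : Function.Injective f := f.injective
  have hAdeg : A.charpoly.natDegree = k := by
    rw [charpoly_natDegree_eq_dim]; simp
  have hc0 : ∀ i : ℕ, 1 ≤ i → i ≤ k - 2 → A.charpoly.coeff i = 0 := by
    intro i hi1 hi2
    apply finj
    rw [hAco, map_zero, hcoeffB i (by omega), hE (k - i) (by omega) (by omega),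
      if_neg (by omega), mul_zero]
  have hck1 : A.charpoly.coeff (k - 1) = -1 := by
    apply finj
    rw [hAco, hcoeffB (k - 1) (by omega), hE (k - (k - 1)) (by omega) (by omega)]
    have : k - (k - 1) = 1 := by omega
    rw [this, if_pos rfl, mul_one, pow_one, map_neg, _root_.map_one]
  have hck : A.charpoly.coeff k = 1 := by
    have := (Matrix.charpoly_monic A).leadingCoeff
    rwa [Polynomial.leadingCoeff, hAdeg] at this
  -- Cayley-Hamilton
  have hCH := Matrix.aeval_self_charpoly A
  have hsum := Polynomial.aeval_eq_sum_range (p := A.charpoly) A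
  rw [hAdeg] at hsum
  have h0 : (0 : Matrix (Fin k) (Fin k) ℝ)
      = ∑ i ∈ range (k + 1), A.charpoly.coeff i • (A⁻¹ * A ^ i) := by
    calc (0 : Matrix (Fin k) (Fin k) ℝ) = A⁻¹ * (aeval A A.charpoly) := by rw [hCH, mul_zero]
    _ = ∑ i ∈ range (k + 1), A.charpoly.coeff i • (A⁻¹ * A ^ i) := by
        rw [hsum, Finset.mul_sum]
        apply Finset.sum_congr rfl
        intro i _
        rw [mul_smul_comm]
  have htrace0 : (0 : ℝ) = ∑ i ∈ range (k + 1), A.charpoly.coeff i * (A⁻¹ * A ^ i).trace := by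
    have := congrArg Matrix.trace h0
    rw [Matrix.trace_zero, Matrix.trace_sum] at this
    convert this using 2 with i
    rw [Matrix.trace_smul, smul_eq_mul]
  have ht0 : (A⁻¹ * A ^ 0).trace = 1 := by rw [pow_zero, mul_one, hinv]
  have hts : ∀ j : ℕ, (A⁻¹ * A ^ (j + 1)).trace = (A ^ j).trace := by
    intro j
    rw [pow_succ', ← mul_assoc, Matrix.nonsing_inv_mul A hAdet, one_mul]
  set F : ℕ → ℝ := fun i => A.charpoly.coeff i * (A⁻¹ * A ^ i).trace with hF
  set S : Finset ℕ := {0, k - 1, k} with hS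
  have hSsub : S ⊆ range (k + 1) := by
    intro x hx
    rw [hS, Finset.mem_insert, Finset.mem_insert, Finset.mem_singleton] at hx
    rw [Finset.mem_range]
    omega
  have hvanish : ∀ i ∈ range (k + 1), i ∉ S → F i = 0 := by
    intro i hi hni
    rw [Finset.mem_range] at hi
    rw [hS, Finset.mem_insert, Finset.mem_insert, Finset.mem_singleton] at hni
    push_neg at hni
    rw [hF]
    simp only
    rw [hc0 i (by omega) (by omega), zero_mul]
  have hsplitsum : ∑ i ∈ range (k + 1), F i = F 0 + (F (k - 1) + F k) := by
    rw [← Finset.sum_subset hSsub hvanish, hS]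
    rw [Finset.sum_insert (by simp; omega), Finset.sum_insert (by simp; omega),
      Finset.sum_singleton]
  have hF0 : F 0 = A.charpoly.coeff 0 := by rw [hF]; simp only; rw [ht0, mul_one]
  have hFk1 : F (k - 1) = -1 := by
    rw [hF]
    simp only
    have e : k - 1 = (k - 2) + 1 := by omega
    rw [hck1, e, hts, htr (k - 2) (by omega) (by omega)]
    norm_num
  have hFk : F k = 1 := by
    rw [hF]
    simp only
    have e : A ^ k = A ^ ((k - 1) + 1) := by congr 1; omega
    rw [hck, e, hts, hcontra]
    norm_num
  have hc00 : A.charpoly.coeff 0 = 0 := by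
    have h := htrace0
    rw [hsplitsum, hF0, hFk1, hFk] at h
    linarith
  have hdet0 : A.det = 0 := by
    rw [Matrix.det_eq_sign_charpoly_coeff, hc00, mul_zero]
  rw [hdet0] at hAdet
  simpa using hAdet
end

section
/- Let M ∈ GL_{2g}(ℤ) be improper symplectic (Mᵀ J M = −J). Then its characteristic polynomial P satisfies P(x) = (−1)^g x^{2g} P(−1/x); equivalently the coefficients satisfy s_h = (−1)^{g+h} s_{2g−h} for all h ∈ {1,…,2g}. -/
open Polynomial Matrix

local notation "K" => RatFunc ℚ
set_option maxHeartbeats 1000000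
set_option synthInstance.maxHeartbeats 1000000


section EXT

variable {Mo : Type*} [AddCommGroup Mo] [Module ℤ Mo]

local notation "ιe" => ExteriorAlgebra.ι ℤ (M := Mo)

private lemma iotaswap (x y : Mo) : ιe x * ιe y = -(ιe y * ιe x) :=
  eq_neg_of_add_eq_zero_left (ExteriorAlgebra.ι_add_mul_swap x y)

private lemma iotamove (a b c : Mo) : (ιe a * ιe b) * ιe c = ιe c * (ιe a * ιe b) := by
  rw [mul_assoc, iotaswap b c, mul_neg, ← mul_assoc, iotaswap a c, neg_mul, neg_neg, mul_assoc]

private lemma pairsq (a b : Mo) : (ιe a * ιe b) * (ιe a * ιe b) = 0 := by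
  rw [mul_assoc, ← mul_assoc (ιe b), iotaswap b a, neg_mul, mul_neg, mul_assoc (ιe a) (ιe b),
    ExteriorAlgebra.ι_sq_zero, mul_zero, mul_zero, neg_zero]

private lemma paircomm (a b c d : Mo) : Commute (ιe a * ιe b) (ιe c * ιe d) := by
  show (ιe a * ιe b) * (ιe c * ιe d) = (ιe c * ιe d) * (ιe a * ιe b)
  rw [← mul_assoc, iotamove a b c, mul_assoc, iotamove a b d, ← mul_assoc]

/-- interleaving of two tuples -/
private def itv : {m : ℕ} → {α : Type*} → (Fin m → α) → (Fin m → α) → Fin (2 * m) → α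
  | 0, _, _, _ => Fin.elim0
  | (m + 1), _, u, v =>
      Fin.cons (u 0) (Fin.cons (v 0) (itv (fun i => u i.succ) (fun i => v i.succ)))

private lemma itv_succ {m : ℕ} {α : Type*} (u v : Fin (m + 1) → α) :
    itv u v = Fin.cons (u 0) (Fin.cons (v 0) (itv (fun i => u i.succ) (fun i => v i.succ))) :=
  rfl

private lemma itv_comp {α β : Type*} (f : α → β) :
    ∀ (m : ℕ) (u v : Fin m → α),
      itv (fun i => f (u i)) (fun i => f (v i)) = fun j => f (itv u v j) := by
  intro m
  induction m with
  | zero => intro u v; funext j; exact j.elim0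
  | succ m ih =>
      intro u v
      funext j
      refine Fin.cases ?_ (fun ja => ?_) j
      · simp [itv_succ]
      · refine Fin.cases ?_ (fun jb => ?_) ja
        · simp [itv_succ]
        · simp only [itv_succ, Fin.cons_succ, Fin.cons_zero,
            ih (fun i => u i.succ) (fun i => v i.succ)]

private lemma itv_range {α : Type*} :
    ∀ (m : ℕ) (u v : Fin m → α), Set.range (itv u v) ⊆ Set.range u ∪ Set.range v := by
  intro m
  induction m with
  | zero => intro u v; rintro x ⟨j, rfl⟩; exact j.elim0
  | succ m ih =>
      intro u v
      rw [itv_succ, Fin.range_cons, Fin.range_cons]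
      intro x hx
      rcases hx with rfl | rfl | hx
      · exact Or.inl ⟨0, rfl⟩
      · exact Or.inr ⟨0, rfl⟩
      · rcases ih (fun i => u i.succ) (fun i => v i.succ) hx with ⟨j, rfl⟩ | ⟨j, rfl⟩
        · exact Or.inl ⟨j.succ, rfl⟩
        · exact Or.inr ⟨j.succ, rfl⟩

private lemma itv_injective {α : Type*} :
    ∀ (m : ℕ) (u v : Fin m → α), Function.Injective u → Function.Injective v →
      (∀ i j, u i ≠ v j) → Function.Injective (itv u v) := by
  intro m
  induction m with
  | zero => intro u v _ _ _ j; exact j.elim0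
  | succ m ih =>
      intro u v hu hv huv
      rw [itv_succ]
      have hrest : Function.Injective (itv (fun i => u i.succ) (fun i => v i.succ)) := by
        refine ih _ _ ?_ ?_ ?_
        · exact fun i j h => Fin.succ_injective _ (hu h)
        · exact fun i j h => Fin.succ_injective _ (hv h)
        · exact fun i j => huv i.succ j.succ
      have hv0 : (v 0) ∉ Set.range (itv (fun i => u i.succ) (fun i => v i.succ)) := by
        intro hmem
        rcases itv_range m _ _ hmem with ⟨j, hj⟩ | ⟨j, hj⟩
        · exact huv j.succ 0 hj
        · exact (Fin.succ_ne_zero j) (hv hj)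
      have hinner : Function.Injective
          (Fin.cons (v 0) (itv (fun i => u i.succ) (fun i => v i.succ)) : Fin (2*m+1) → α) :=
        Fin.cons_injective_of_injective hv0 hrest
      refine Fin.cons_injective_of_injective ?_ hinner
      rw [Fin.range_cons]
      rintro (h | ⟨j, hj⟩)
      · exact huv 0 0 h
      · rcases itv_range m _ _ ⟨j, hj⟩ with ⟨i, hi⟩ | ⟨i, hi⟩
        · exact (Fin.succ_ne_zero i) (hu hi)
        · exact huv 0 i.succ hi.symm

private lemma lemZ :
    ∀ (m k : ℕ) (u v : Fin m → Mo), m < k →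
      (∑ i : Fin m, ιe (u i) * ιe (v i)) ^ k = 0 := by
  intro m
  induction m with
  | zero =>
      intro k u v hk
      rw [Finset.univ_eq_empty, Finset.sum_empty, zero_pow (by omega)]
  | succ m ih =>
      intro k u v hk
      rw [Fin.sum_univ_succ]
      have hc : Commute (ιe (u 0) * ιe (v 0)) (∑ i : Fin m, ιe (u i.succ) * ιe (v i.succ)) :=
        Commute.sum_right _ _ _ (fun i _ => paircomm _ _ _ _)
      rw [hc.add_pow]
      apply Finset.sum_eq_zero
      intro j hj
      match j with
      | 0 =>
          rw [pow_zero, one_mul, Nat.sub_zero,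
            ih k (fun i => u i.succ) (fun i => v i.succ) (by omega), zero_mul]
      | 1 =>
          rw [ih (k - 1) (fun i => u i.succ) (fun i => v i.succ) (by omega), mul_zero, zero_mul]
      | (j + 2) =>
          have hxx : (ιe (u 0) * ιe (v 0)) ^ (j + 2)
              = (ιe (u 0) * ιe (v 0)) ^ j * ((ιe (u 0) * ιe (v 0)) * (ιe (u 0) * ιe (v 0))) := by
            rw [pow_add, sq]
          rw [hxx, pairsq, mul_zero, zero_mul, zero_mul]

private lemma lemKEY :
    ∀ (m : ℕ) (u v : Fin m → Mo),
      (∑ i : Fin m, ιe (u i) * ιe (v i)) ^ m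
        = m.factorial • ExteriorAlgebra.ιMulti ℤ (2 * m) (itv u v) := by
  intro m
  induction m with
  | zero =>
      intro u v
      rw [Finset.univ_eq_empty, Finset.sum_empty, pow_zero, Nat.factorial_zero, one_smul]
      exact (ExteriorAlgebra.ιMulti_zero_apply (itv u v)).symm
  | succ m ih =>
      intro u v
      rw [Fin.sum_univ_succ]
      have hc : Commute (ιe (u 0) * ιe (v 0)) (∑ i : Fin m, ιe (u i.succ) * ιe (v i.succ)) :=
        Commute.sum_right _ _ _ (fun i _ => paircomm _ _ _ _)
      rw [hc.add_pow]
      rw [Finset.sum_eq_single 1]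
      · rw [pow_one, Nat.add_sub_cancel, Nat.choose_one_right]
        rw [ih (fun i => u i.succ) (fun i => v i.succ)]
        rw [mul_smul_comm, smul_mul_assoc]
        have htail2 : Matrix.vecTail
            (Fin.cons (v 0) (itv (fun i => u i.succ) (fun i => v i.succ)) : Fin (2*m+1) → Mo)
            = itv (fun i => u i.succ) (fun i => v i.succ) := by
          funext j
          simp [Matrix.vecTail, Fin.cons_succ]
        have htail1 : Matrix.vecTail
            (Fin.cons (u 0) (Fin.cons (v 0) (itv (fun i => u i.succ) (fun i => v i.succ)))
              : Fin (2*m+1+1) → Mo)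
            = Fin.cons (v 0) (itv (fun i => u i.succ) (fun i => v i.succ)) := by
          funext j
          simp [Matrix.vecTail, Fin.cons_succ]
        have hxι : (ιe (u 0) * ιe (v 0))
              * ExteriorAlgebra.ιMulti ℤ (2*m) (itv (fun i => u i.succ) (fun i => v i.succ))
            = ExteriorAlgebra.ιMulti ℤ (2*(m+1)) (itv u v) := by
          calc (ιe (u 0) * ιe (v 0))
                * ExteriorAlgebra.ιMulti ℤ (2*m) (itv (fun i => u i.succ) (fun i => v i.succ))
              = ιe (u 0) * (ιe (v 0)
                * ExteriorAlgebra.ιMulti ℤ (2*m) (itv (fun i => u i.succ) (fun i => v i.succ))) := by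
                rw [mul_assoc]
            _ = ιe (u 0) * ExteriorAlgebra.ιMulti ℤ (2*m+1)
                  (Fin.cons (v 0) (itv (fun i => u i.succ) (fun i => v i.succ))) := by
                rw [ExteriorAlgebra.ιMulti_succ_apply
                  (v := Fin.cons (v 0) (itv (fun i => u i.succ) (fun i => v i.succ)))]
                rw [htail2, Fin.cons_zero]
            _ = ExteriorAlgebra.ιMulti ℤ (2*m+1+1)
                  (Fin.cons (u 0)
                    (Fin.cons (v 0) (itv (fun i => u i.succ) (fun i => v i.succ)))) := by
                rw [ExteriorAlgebra.ιMulti_succ_apply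
                  (v := Fin.cons (u 0)
                    (Fin.cons (v 0) (itv (fun i => u i.succ) (fun i => v i.succ))))]
                rw [htail1, Fin.cons_zero]
            _ = ExteriorAlgebra.ιMulti ℤ (2*(m+1)) (itv u v) := by
                rw [itv_succ]
                rfl
        rw [hxι]
        rw [(Nat.commute_cast (ExteriorAlgebra.ιMulti ℤ (2*(m+1)) (itv u v)) (m+1)).eq,
          ← nsmul_eq_mul, smul_smul, Nat.factorial_succ, Nat.mul_comm]
      · intro j hj hj1
        match j with
        | 0 =>
            rw [pow_zero, one_mul, Nat.sub_zero,
              lemZ m (m+1) (fun i => u i.succ) (fun i => v i.succ) (by omega), zero_mul]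
        | 1 => exact absurd rfl hj1
        | (j + 2) =>
            have hxx : (ιe (u 0) * ιe (v 0)) ^ (j + 2)
                = (ιe (u 0) * ιe (v 0)) ^ j
                  * ((ιe (u 0) * ιe (v 0)) * (ιe (u 0) * ιe (v 0))) := by
              rw [pow_add, sq]
            rw [hxx, pairsq, mul_zero, zero_mul, zero_mul]
      · intro h1
        exact absurd (Finset.mem_range.mpr (by omega)) h1

end EXT

private abbrev Jmat (g : ℕ) : Matrix (Fin g ⊕ Fin g) (Fin g ⊕ Fin g) ℤ :=
  Matrix.fromBlocks 0 1 (-1) 0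

private lemma JmatJmat {g : ℕ} : Jmat g * Jmat g = -1 := by
  rw [Jmat, Matrix.fromBlocks_multiply, ← Matrix.fromBlocks_one, Matrix.fromBlocks_neg]
  congr 1 <;> simp

private lemma card2g {g : ℕ} : Fintype.card (Fin g ⊕ Fin g) = 2 * g := by
  simp [Fintype.card_sum, two_mul]

private lemma part1 {g : ℕ} (M : Matrix (Fin g ⊕ Fin g) (Fin g ⊕ Fin g) ℤ)
    (hM : IsUnit M)
    (hsymp : M.transpose * Jmat g * M = -(Jmat g)) : M.det = (-1) ^ g := by
  classical
  have hdetJJ : (Jmat g).det * (Jmat g).det = 1 := by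
    rw [← Matrix.det_mul, JmatJmat, Matrix.det_neg, Matrix.det_one, card2g, mul_one, pow_mul]
    norm_num
  have hJu : IsUnit (Jmat g) :=
    (Matrix.isUnit_iff_isUnit_det _).mpr (IsUnit.of_mul_eq_one _ hdetJJ)
  have hMT : IsUnit Mᵀ := by
    rw [Matrix.isUnit_iff_isUnit_det, Matrix.det_transpose]
    exact (Matrix.isUnit_iff_isUnit_det _).mp hM
  have hMJM : M * Jmat g * Mᵀ = -(Jmat g) := by
    refine (hMT.mul hJu).mul_left_cancel ?_
    have e1 : (Mᵀ * Jmat g) * (M * Jmat g * Mᵀ) = (Mᵀ * Jmat g * M) * Jmat g * Mᵀ := by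
      simp only [Matrix.mul_assoc]
    rw [e1, hsymp, Matrix.neg_mul, JmatJmat, neg_neg, Matrix.one_mul, Matrix.mul_neg,
      Matrix.mul_assoc, JmatJmat, Matrix.mul_neg, Matrix.mul_one, neg_neg]
  -- exterior algebra setup
  set b := Pi.basisFun ℤ (Fin g ⊕ Fin g) with hbdef
  set φ := Matrix.toLin' M with hφdef
  have hφ : ∀ k, φ (b k) = ∑ a, M a k • b a := by
    intro k
    funext x
    rw [hφdef, Matrix.toLin'_apply, hbdef]
    simp only [Pi.basisFun_apply]
    rw [Matrix.mulVec_single]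
    simp [Finset.sum_apply, Pi.single_apply, mul_comm]
  have hexp : ∀ k, ExteriorAlgebra.ι ℤ (φ (b k)) = ∑ a, M a k • ExteriorAlgebra.ι ℤ (b a) := by
    intro k
    rw [hφ k, map_sum]
    exact Finset.sum_congr rfl (fun a _ => LinearMap.map_smul _ _ _)
  set J0 : Matrix (Fin g ⊕ Fin g) (Fin g ⊕ Fin g) ℤ := Matrix.fromBlocks 0 1 0 0 with hJ0def
  set T : Matrix (Fin g ⊕ Fin g) (Fin g ⊕ Fin g) ℤ → ExteriorAlgebra ℤ ((Fin g ⊕ Fin g) → ℤ) :=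
    fun Kk => ∑ a, ∑ e, Kk a e • (ExteriorAlgebra.ι ℤ (b a) * ExteriorAlgebra.ι ℤ (b e))
    with hTdef
  have hTt : ∀ Kk, T Kkᵀ = -T Kk := by
    intro Kk
    simp only [hTdef, Matrix.transpose_apply]
    rw [Finset.sum_comm]
    rw [← Finset.sum_neg_distrib]
    refine Finset.sum_congr rfl (fun x _ => ?_)
    rw [← Finset.sum_neg_distrib]
    refine Finset.sum_congr rfl (fun y _ => ?_)
    rw [iotaswap, smul_neg]
  have hTsub : ∀ A B, T (A - B) = T A - T B := by
    intro A B
    simp only [hTdef]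
    rw [← Finset.sum_sub_distrib]
    refine Finset.sum_congr rfl (fun x _ => ?_)
    rw [← Finset.sum_sub_distrib]
    refine Finset.sum_congr rfl (fun y _ => ?_)
    rw [Matrix.sub_apply, sub_smul]
  have hTneg : ∀ A, T (-A) = -T A := by
    intro A
    simp only [hTdef]
    rw [← Finset.sum_neg_distrib]
    refine Finset.sum_congr rfl (fun x _ => ?_)
    rw [← Finset.sum_neg_distrib]
    refine Finset.sum_congr rfl (fun y _ => ?_)
    rw [Matrix.neg_apply, neg_smul]
  -- collapse of J0 sums
  have hTJ0gen : ∀ (c : (Fin g ⊕ Fin g) → ((Fin g ⊕ Fin g) → ℤ)),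
      (∑ a, ∑ e, J0 a e • (ExteriorAlgebra.ι ℤ (c a) * ExteriorAlgebra.ι ℤ (c e)))
        = ∑ i : Fin g, ExteriorAlgebra.ι ℤ (c (Sum.inl i)) * ExteriorAlgebra.ι ℤ (c (Sum.inr i)) := by
    intro c
    rw [hJ0def]
    simp [Fintype.sum_sum_type, Matrix.fromBlocks_apply₁₁, Matrix.fromBlocks_apply₁₂,
      Matrix.fromBlocks_apply₂₁, Matrix.fromBlocks_apply₂₂, Matrix.one_apply, ite_smul,
      Finset.sum_ite_eq]
  have hTJ0 : T J0 = ∑ i : Fin g,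
      ExteriorAlgebra.ι ℤ (b (Sum.inl i)) * ExteriorAlgebra.ι ℤ (b (Sum.inr i)) := by
    rw [hTdef]
    exact hTJ0gen b
  -- entries of M * J0 * Mᵀ
  have hMJ0M : ∀ a e, (M * J0 * Mᵀ) a e = ∑ i : Fin g, M a (Sum.inl i) * M e (Sum.inr i) := by
    intro a e
    rw [hJ0def]
    simp [Matrix.mul_apply, Matrix.transpose_apply, Fintype.sum_sum_type,
      Matrix.fromBlocks_apply₁₁, Matrix.fromBlocks_apply₁₂, Matrix.fromBlocks_apply₂₁,
      Matrix.fromBlocks_apply₂₂, Matrix.one_apply, mul_ite, ite_mul, mul_zero, zero_mul,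
      mul_one, Finset.sum_ite_eq, Finset.sum_ite_eq', Finset.mul_sum, Finset.sum_mul]
  have hβ' : T (M * J0 * Mᵀ) = ∑ i : Fin g,
      ExteriorAlgebra.ι ℤ (φ (b (Sum.inl i))) * ExteriorAlgebra.ι ℤ (φ (b (Sum.inr i))) := by
    simp only [hTdef, hMJ0M, Finset.sum_smul]
    have hrhs : ∀ i : Fin g,
        ExteriorAlgebra.ι ℤ (φ (b (Sum.inl i))) * ExteriorAlgebra.ι ℤ (φ (b (Sum.inr i)))
          = ∑ a, ∑ e, (M a (Sum.inl i) * M e (Sum.inr i))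
              • (ExteriorAlgebra.ι ℤ (b a) * ExteriorAlgebra.ι ℤ (b e)) := by
      intro i
      rw [hexp, hexp, Finset.sum_mul_sum]
      refine Finset.sum_congr rfl (fun a _ => ?_)
      refine Finset.sum_congr rfl (fun e _ => ?_)
      rw [smul_mul_smul_comm]
    rw [Finset.sum_congr rfl (fun i _ => hrhs i)]
    calc ∑ a, ∑ e, ∑ i : Fin g, (M a (Sum.inl i) * M e (Sum.inr i))
            • (ExteriorAlgebra.ι ℤ (b a) * ExteriorAlgebra.ι ℤ (b e))
        = ∑ a, ∑ i : Fin g, ∑ e, (M a (Sum.inl i) * M e (Sum.inr i))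
            • (ExteriorAlgebra.ι ℤ (b a) * ExteriorAlgebra.ι ℤ (b e)) :=
          Finset.sum_congr rfl (fun a _ => Finset.sum_comm)
      _ = ∑ i : Fin g, ∑ a, ∑ e, (M a (Sum.inl i) * M e (Sum.inr i))
            • (ExteriorAlgebra.ι ℤ (b a) * ExteriorAlgebra.ι ℤ (b e)) := Finset.sum_comm
  -- J = J0 - J0ᵀ
  have hJ0J0t : Jmat g = J0 - J0ᵀ := by
    rw [hJ0def, Matrix.fromBlocks_transpose, Jmat]
    rw [sub_eq_add_neg, Matrix.fromBlocks_neg, Matrix.fromBlocks_add]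
    congr 1 <;> simp
  have hMJMe : M * J0 * Mᵀ - (M * J0 * Mᵀ)ᵀ = -(Jmat g) := by
    have h1 : (M * J0 * Mᵀ)ᵀ = M * J0ᵀ * Mᵀ := by
      rw [Matrix.transpose_mul, Matrix.transpose_mul, Matrix.transpose_transpose,
        Matrix.mul_assoc]
    rw [h1, ← Matrix.sub_mul, ← Matrix.mul_sub, ← hJ0J0t, hMJM]
  -- the 2 • β' = -2 • β identity
  have h2β : (2 : ℤ) • T (M * J0 * Mᵀ) = (-2 : ℤ) • T J0 := by
    have e1 : T (M * J0 * Mᵀ) - T ((M * J0 * Mᵀ)ᵀ) = T (-(Jmat g)) := by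
      rw [← hTsub, hMJMe]
    rw [hTt, sub_neg_eq_add, hTneg, hJ0J0t, hTsub, hTt, sub_neg_eq_add] at e1
    have e2 : (2 : ℤ) • T (M * J0 * Mᵀ) = T (M * J0 * Mᵀ) + T (M * J0 * Mᵀ) := two_smul ℤ _
    have e3 : (-2 : ℤ) • T J0 = -(T J0 + T J0) := by
      have : (-2 : ℤ) = -(2 : ℤ) := rfl
      rw [this, neg_smul, two_smul]
    rw [e2, e3, e1]
  -- interleaving permutation and basis
  set τ : Fin (2 * g) → (Fin g ⊕ Fin g) := itv Sum.inl Sum.inr with hτdef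
  have hτinj : Function.Injective τ := by
    rw [hτdef]
    exact itv_injective g Sum.inl Sum.inr Sum.inl_injective Sum.inr_injective
      (fun i j h => Sum.inl_ne_inr h)
  have hτbij : Function.Bijective τ :=
    (Fintype.bijective_iff_injective_and_card τ).mpr ⟨hτinj, by rw [Fintype.card_fin, card2g]⟩
  set ρ : Fin (2 * g) ≃ (Fin g ⊕ Fin g) := Equiv.ofBijective τ hτbij with hρdef
  set B := b.reindex ρ.symm with hBdef
  have hB : ∀ j, B j = b (τ j) := by
    intro j
    rw [hBdef, Module.Basis.reindex_apply, Equiv.symm_symm]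
    rfl
  have hit1 : itv (fun i => b (Sum.inl i)) (fun i => b (Sum.inr i)) = fun j => b (τ j) := by
    rw [hτdef]
    exact itv_comp (⇑b) g Sum.inl Sum.inr
  have hit2 : itv (fun i => φ (b (Sum.inl i))) (fun i => φ (b (Sum.inr i)))
      = fun j => φ (b (τ j)) := by
    rw [hτdef]
    exact itv_comp (fun k => φ (b k)) g Sum.inl Sum.inr
  -- the linear functional
  set f : ∀ i : ℕ, ((Fin g ⊕ Fin g) → ℤ) [⋀^Fin i]→ₗ[ℤ] ℤ :=
    fun i => if h : 2 * g = i then (B.det).domDomCongr (finCongr h) else 0 with hfdef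
  set F := ExteriorAlgebra.liftAlternating (R := ℤ) (M := (Fin g ⊕ Fin g) → ℤ) (N := ℤ) f
    with hFdef
  have hF : ∀ w : Fin (2 * g) → ((Fin g ⊕ Fin g) → ℤ),
      F (ExteriorAlgebra.ιMulti ℤ (2 * g) w) = B.det w := by
    intro w
    rw [hFdef, ExteriorAlgebra.liftAlternating_apply_ιMulti]
    have hf2g : f (2 * g) = B.det := by
      simp only [hfdef, dif_pos]
      rw [finCongr_refl, AlternatingMap.domDomCongr_refl]
    rw [hf2g]
  -- raise to the g-th power and apply F
  have key : ((2 : ℤ) • T (M * J0 * Mᵀ)) ^ g = ((-2 : ℤ) • T J0) ^ g := by rw [h2β]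
  rw [_root_.smul_pow, _root_.smul_pow, hβ', hTJ0, lemKEY g _ _, lemKEY g _ _, hit1, hit2] at key
  have hkF := congrArg F key
  rw [LinearMap.map_smul, LinearMap.map_smul] at hkF
  rw [_root_.map_nsmul, _root_.map_nsmul, hF, hF] at hkF
  have hdet1 : B.det (fun j => φ (b (τ j))) = M.det := by
    have hcomp : (fun j => φ (b (τ j))) = ⇑φ ∘ ⇑B := by
      funext j
      simp [Function.comp, hB j]
    rw [hcomp, Module.Basis.det_comp, Module.Basis.det_self, mul_one, hφdef, LinearMap.det_toLin']
  have hdet2 : B.det (fun j => b (τ j)) = 1 := by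
    have hcomp : (fun j => b (τ j)) = ⇑B := by
      funext j
      rw [hB j]
    rw [hcomp, Module.Basis.det_self]
  rw [hdet1, hdet2] at hkF
  -- conclude
  have hfin : (2 : ℤ) ^ g * ((g.factorial : ℤ) * M.det)
      = (2 : ℤ) ^ g * ((g.factorial : ℤ) * (-1) ^ g) := by
    have hneg2 : ((-2 : ℤ)) ^ g = (-1) ^ g * 2 ^ g := by
      rw [show (-2 : ℤ) = (-1) * 2 by ring, mul_pow]
    calc (2 : ℤ) ^ g * ((g.factorial : ℤ) * M.det)
        = (2 : ℤ) ^ g • ((g.factorial : ℕ) • M.det) := by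
          simp [smul_eq_mul, nsmul_eq_mul]
      _ = (-2 : ℤ) ^ g • ((g.factorial : ℕ) • (1 : ℤ)) := hkF
      _ = (2 : ℤ) ^ g * ((g.factorial : ℤ) * (-1) ^ g) := by
          simp only [smul_eq_mul, nsmul_eq_mul, hneg2]
          ring
  have h1 := mul_left_cancel₀ (pow_ne_zero g (two_ne_zero : (2:ℤ) ≠ 0)) hfin
  exact mul_left_cancel₀ (Int.natCast_ne_zero.mpr (Nat.factorial_ne_zero g)) h1

private lemma part2 {g : ℕ} (M : Matrix (Fin g ⊕ Fin g) (Fin g ⊕ Fin g) ℤ)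
    (hdet : M.det = (-1) ^ g)
    (hsymp : M.transpose * Jmat g * M = -(Jmat g)) :
    ∀ h : ℕ, 1 ≤ h → h ≤ 2 * g →
      M.charpoly.coeff (2 * g - h) = (-1) ^ (g + h) * M.charpoly.coeff h := by
  classical
  set p := M.charpoly with hp
  set N : Matrix (Fin g ⊕ Fin g) (Fin g ⊕ Fin g) K := M.map (algebraMap ℤ K) with hN
  set JK : Matrix (Fin g ⊕ Fin g) (Fin g ⊕ Fin g) K := (Jmat g).map (algebraMap ℤ K) with hJK
  have hmapneg : ∀ (A : Matrix (Fin g ⊕ Fin g) (Fin g ⊕ Fin g) ℤ),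
      (-A).map (algebraMap ℤ K) = -(A.map (algebraMap ℤ K)) := by
    intro A; ext i j; simp
  have hJKJK : JK * JK = -1 := by
    rw [hJK, ← Matrix.map_mul, JmatJmat]
    ext i j
    by_cases hij : i = j <;>
      simp [Matrix.map_apply, Matrix.one_apply, hij]
  have hdetJK : JK.det * JK.det = 1 := by
    rw [← Matrix.det_mul, hJKJK, Matrix.det_neg, Matrix.det_one, card2g, mul_one, pow_mul]
    norm_num
  have hJKne : JK.det ≠ 0 := by
    intro h0
    rw [h0, mul_zero] at hdetJK
    exact zero_ne_one hdetJK
  have hNJN : Nᵀ * JK * N = -JK := by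
    rw [hN, hJK, ← Matrix.transpose_map, ← Matrix.map_mul, ← Matrix.map_mul, hsymp, hmapneg]
  have hdetN : N.det = ((-1) ^ g : K) := by
    have h1 := RingHom.map_det (algebraMap ℤ K) M
    rw [hdet] at h1
    have h2 : ((algebraMap ℤ K).mapMatrix M) = N := rfl
    rw [h2] at h1
    rw [← h1]
    push_cast
    ring
  have hneg1pow : ((-1 : K)) ^ (2 * g) = 1 := by
    rw [pow_mul]; norm_num
  -- evaluation of charpoly
  have h_evals : ∀ s : K,
      (Polynomial.aeval s) p = (s • (1 : Matrix (Fin g ⊕ Fin g) (Fin g ⊕ Fin g) K) - N).det := by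
    intro s
    rw [hp, Matrix.charpoly]
    have hmd := AlgHom.map_det (Polynomial.aeval s : ℤ[X] →ₐ[ℤ] K) (charmatrix M)
    rw [hmd]
    have h2 : ((Polynomial.aeval s : ℤ[X] →ₐ[ℤ] K).mapMatrix (charmatrix M))
        = (charmatrix M).map (Polynomial.aeval s) := rfl
    rw [h2]
    congr 1
    ext i j
    by_cases hij : i = j
    · subst hij
      simp [charmatrix_apply_eq, Matrix.map_apply, Matrix.sub_apply, Matrix.smul_apply,
        Matrix.one_apply, hN, algebraMap_int_eq]
    · simp [charmatrix_apply_ne _ _ _ hij, Matrix.map_apply, Matrix.sub_apply, Matrix.smul_apply,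
        Matrix.one_apply, hij, hN, algebraMap_int_eq]
  set t : K := RatFunc.X with ht'
  have ht : t ≠ 0 := RatFunc.X_ne_zero
  have hE1 : (Nᵀ * JK) * (1 + t • N) = (Nᵀ - t • 1) * JK := by
    rw [Matrix.mul_add, Matrix.mul_one, Matrix.mul_smul,
      hNJN, Matrix.sub_mul, Matrix.smul_mul, Matrix.one_mul, smul_neg]
    abel
  have hdets : ((-1) ^ g : K) * (1 + t • N).det
      = (t • (1 : Matrix (Fin g ⊕ Fin g) (Fin g ⊕ Fin g) K) - N).det := by
    have h1 := congrArg Matrix.det hE1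
    rw [Matrix.det_mul, Matrix.det_mul, Matrix.det_mul, Matrix.det_transpose, hdetN] at h1
    have h2 : (((-1) ^ g : K) * (1 + t • N).det) * JK.det = (Nᵀ - t • 1).det * JK.det := by
      rw [← h1]; ring
    have h3 := mul_right_cancel₀ hJKne h2
    rw [h3]
    have h4 : Nᵀ - t • (1 : Matrix (Fin g ⊕ Fin g) (Fin g ⊕ Fin g) K) = (N - t • 1)ᵀ := by
      rw [Matrix.transpose_sub, Matrix.transpose_smul, Matrix.transpose_one]
    rw [h4, Matrix.det_transpose,
      ← neg_sub (t • (1 : Matrix (Fin g ⊕ Fin g) (Fin g ⊕ Fin g) K)) N, Matrix.det_neg, card2g,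
      hneg1pow, one_mul]
  have hsplit : (1 : Matrix (Fin g ⊕ Fin g) (Fin g ⊕ Fin g) K) + t • N
      = t • (t⁻¹ • (1 : Matrix (Fin g ⊕ Fin g) (Fin g ⊕ Fin g) K) + N) := by
    rw [smul_add, smul_smul, mul_inv_cancel₀ ht, one_smul]
  have hflip : t⁻¹ • (1 : Matrix (Fin g ⊕ Fin g) (Fin g ⊕ Fin g) K) + N
      = -((-t⁻¹) • (1 : Matrix (Fin g ⊕ Fin g) (Fin g ⊕ Fin g) K) - N) := by
    rw [neg_smul, neg_sub, sub_neg_eq_add, add_comm]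
  have hmain : (Polynomial.aeval t) p = (-1) ^ g * (t ^ (2 * g) * (Polynomial.aeval (-t⁻¹)) p) := by
    rw [h_evals t, ← hdets, hsplit, Matrix.det_smul, card2g, hflip, Matrix.det_neg, card2g,
      hneg1pow, one_mul, h_evals (-t⁻¹)]
  -- extract coefficients
  have hcard : p.natDegree < 2 * g + 1 := by
    rw [hp, Matrix.charpoly_natDegree_eq_dim, card2g]
    omega
  set q : ℤ[X] := ∑ j ∈ Finset.range (2 * g + 1),
      Polynomial.monomial (2 * g - j) ((-1) ^ (g + j) * p.coeff j) with hq
  have haq : (Polynomial.aeval t) q = (-1) ^ g * (t ^ (2 * g) * (Polynomial.aeval (-t⁻¹)) p) := by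
    conv_rhs => rw [p.as_sum_range' (2 * g + 1) hcard]
    rw [hq, map_sum, map_sum, Finset.mul_sum, Finset.mul_sum]
    refine Finset.sum_congr rfl ?_
    intro j hj
    have hj' : j ≤ 2 * g := Nat.lt_succ_iff.mp (Finset.mem_range.mp hj)
    rw [Polynomial.aeval_monomial, Polynomial.aeval_monomial]
    have hpow : (t : K) ^ (2 * g - j) = t ^ (2 * g) * (t ^ j)⁻¹ := by
      rw [pow_sub₀ t ht hj']
    rw [hpow]
    have htj : (t : K) ^ j ≠ 0 := pow_ne_zero _ ht
    have hc : (algebraMap ℤ K) ((-1) ^ (g + j) * p.coeff j)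
        = (-1 : K) ^ (g + j) * (algebraMap ℤ K) (p.coeff j) := by
      push_cast; ring
    rw [hc]
    rw [neg_pow (t⁻¹ : K) j, inv_pow]
    rw [pow_add]
    ring
  have hinj : Function.Injective (Polynomial.aeval t : ℤ[X] → K) := by
    have hcomp : ((Polynomial.aeval t : ℤ[X] →ₐ[ℤ] K) : ℤ[X] →+* K)
        = (algebraMap ℚ[X] K).comp (Polynomial.mapRingHom (Int.castRingHom ℚ)) := by
      apply Polynomial.ringHom_ext
      · intro a
        have h1 := eq_intCast
          (((Polynomial.aeval t : ℤ[X] →ₐ[ℤ] K) : ℤ[X] →+* K).comp (Polynomial.C : ℤ →+* ℤ[X])) a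
        have h2 := eq_intCast
          (((algebraMap ℚ[X] K).comp (Polynomial.mapRingHom (Int.castRingHom ℚ))).comp
            (Polynomial.C : ℤ →+* ℤ[X])) a
        simpa using h1.trans h2.symm
      · simp [ht', RatFunc.algebraMap_X]
    intro a b hab
    have h1 : ((algebraMap ℚ[X] K).comp (Polynomial.mapRingHom (Int.castRingHom ℚ))) a
        = ((algebraMap ℚ[X] K).comp (Polynomial.mapRingHom (Int.castRingHom ℚ))) b := by
      rw [← hcomp]; exact hab
    have hinj2 : Function.Injective
        ((algebraMap ℚ[X] K).comp (Polynomial.mapRingHom (Int.castRingHom ℚ))) := by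
      rw [RingHom.coe_comp]
      exact (RatFunc.algebraMap_injective ℚ).comp
        (Polynomial.map_injective (Int.castRingHom ℚ) Int.cast_injective)
    exact hinj2 h1
  have hpq : p = q := hinj (hmain.trans haq.symm)
  intro h _ h2g
  have hcoeff := congrArg (fun r => Polynomial.coeff r (2 * g - h)) hpq
  simp only [hq] at hcoeff
  rw [Polynomial.finset_sum_coeff] at hcoeff
  rw [hcoeff]
  rw [Finset.sum_eq_single h]
  · rw [Polynomial.coeff_monomial, if_pos rfl]
  · intro j hj hjh
    have hj' : j ≤ 2 * g := Nat.lt_succ_iff.mp (Finset.mem_range.mp hj)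
    rw [Polynomial.coeff_monomial, if_neg]
    omega
  · intro hh
    exact absurd (Finset.mem_range.mpr (by omega)) hh

/-- An improper symplectic integer matrix `M` (i.e. `M.transpose J M = −J`) has characteristic
polynomial satisfying `s_h = (−1)^{g+h} s_{2g−h}` for `h ∈ {1,…,2g}`, where
`s_h = coeff (2g − h)`. -/
theorem stmt_3 (g : ℕ) (M : Matrix (Fin g ⊕ Fin g) (Fin g ⊕ Fin g) ℤ)
    (hM : IsUnit M)
    (hsymp : M.transpose * Matrix.fromBlocks 0 1 (-1) 0 * M = -(Matrix.fromBlocks 0 1 (-1) 0)) :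
    ∀ h : ℕ, 1 ≤ h → h ≤ 2 * g →
      M.charpoly.coeff (2 * g - h) = (-1) ^ (g + h) * M.charpoly.coeff h := by
  have hdet : M.det = (-1) ^ g := part1 M hM hsymp
  exact part2 M hdet hsymp
end

section
/- Let g ≥ 2 and let λ₁,…,λ_{2g} be complex numbers with power sums p_i = Σ_j λ_jⁱ and signed elementary symmetric functions s_j as coefficients of ∏(x−λ_j) = x^{2g} + s₁x^{2g−1} + ⋯ + s_{2g}. If p_i < −1 for all i = 1,…,2g, then s_{2g} > 1. In particular there is no proper symplectic matrix M ∈ GL_{2g}(ℤ) (which forces s_{2g} = det M = 1) whose power sums of eigenvalues satisfy p_i ≤ −2 for all i ≤ 2g. -/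
open Finset

private lemma real_mul_real (z w : ℂ) (hz : z.im = 0) (hw : w.im = 0) :
    z * w = ((z.re * w.re : ℝ) : ℂ) := by
  apply Complex.ext <;> simp [Complex.mul_re, Complex.mul_im, hz, hw]

/-- Newton recurrence evaluated at `lam`. -/
private lemma newton_eval {n : ℕ} (lam : Fin n → ℂ) (k : ℕ) :
    (k : ℂ) * ((-1) ^ k * MvPolynomial.eval lam (MvPolynomial.esymm (Fin n) ℂ k)) =
      - ∑ i ∈ range k, ((-1) ^ i * MvPolynomial.eval lam (MvPolynomial.esymm (Fin n) ℂ i)) *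
        (∑ j, lam j ^ (k - i)) := by
  have h := congrArg (MvPolynomial.eval lam) (MvPolynomial.mul_esymm_eq_sum (Fin n) ℂ k)
  simp only [map_mul, map_sum, map_pow, map_natCast, map_neg, map_one] at h
  have hfil : ∑ a ∈ Finset.HasAntidiagonal.antidiagonal k with a.1 < k,
      ((-1 : ℂ) ^ a.1 * MvPolynomial.eval lam (MvPolynomial.esymm (Fin n) ℂ a.1) *
        MvPolynomial.eval lam (MvPolynomial.psum (Fin n) ℂ a.2)) =
      ∑ i ∈ range k, ((-1) ^ i * MvPolynomial.eval lam (MvPolynomial.esymm (Fin n) ℂ i)) *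
        (∑ j, lam j ^ (k - i)) := by
    rw [Finset.sum_filter, Finset.Nat.sum_antidiagonal_eq_sum_range_succ_mk,
      Finset.sum_range_succ, if_neg (lt_irrefl k), add_zero]
    refine Finset.sum_congr rfl fun i hi => ?_
    rw [if_pos (Finset.mem_range.mp hi)]
    simp [MvPolynomial.psum, mul_assoc]
  rw [hfil] at h
  calc (k : ℂ) * ((-1) ^ k * MvPolynomial.eval lam (MvPolynomial.esymm (Fin n) ℂ k))
      = (-1) ^ k * ((k : ℂ) * MvPolynomial.eval lam (MvPolynomial.esymm (Fin n) ℂ k)) := by ring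
    _ = (-1 : ℂ) ^ k * ((-1) ^ (k + 1) *
        ∑ i ∈ range k, ((-1) ^ i * MvPolynomial.eval lam (MvPolynomial.esymm (Fin n) ℂ i)) *
          (∑ j, lam j ^ (k - i))) := by rw [h]
    _ = _ := by
        rw [← mul_assoc, ← pow_add, show k + (k + 1) = 2 * k + 1 by ring, pow_succ, pow_mul]
        simp

/-- If the power sums of `λ₁, …, λ_{2g}` are real and `< −1` for `i = 1, …, 2g`,
then `s_{2g} = ∏ (−λⱼ)` (the constant coefficient of `∏ (X − λⱼ)`) is real and `> 1`;
in particular `s_{2g} ≠ 1`, so this cannot happen for a proper symplectic matrix. -/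
theorem stmt_5 (g : ℕ) (hg : 2 ≤ g) (lam : Fin (2 * g) → ℂ)
    (p : ℕ → ℂ) (hp : ∀ i, p i = ∑ j, lam j ^ i)
    (hpneg : ∀ i, 1 ≤ i → i ≤ 2 * g → (p i).im = 0 ∧ (p i).re < -1) :
    ((∏ j, (Polynomial.X - Polynomial.C (lam j))).coeff 0).im = 0 ∧
      1 < ((∏ j, (Polynomial.X - Polynomial.C (lam j))).coeff 0).re ∧
      (∏ j, (Polynomial.X - Polynomial.C (lam j))).coeff 0 ≠ 1 := by
  set s : ℕ → ℂ := fun k =>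
    (-1) ^ k * MvPolynomial.eval lam (MvPolynomial.esymm (Fin (2 * g)) ℂ k) with hs
  have hs0 : s 0 = 1 := by simp [hs, MvPolynomial.esymm]
  -- the main induction
  have key : ∀ k, 1 ≤ k → k ≤ 2 * g → (s k).im = 0 ∧ 1 < (s k).re := by
    intro k
    induction k using Nat.strong_induction_on with
    | _ k ih =>
      intro hk1 hk2
      have hnewton := newton_eval lam k
      -- each term is real
      have hterm : ∀ i ∈ range k,
          s i * (∑ j, lam j ^ (k - i)) = (((s i).re * (p (k - i)).re : ℝ) : ℂ) := by
        intro i hi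
        rw [← hp (k - i)]
        have hik : i < k := Finset.mem_range.mp hi
        have hpim : (p (k - i)).im = 0 := (hpneg (k - i) (by omega) (by omega)).1
        have hsim : (s i).im = 0 := by
          rcases Nat.eq_zero_or_pos i with h0 | h1
          · subst h0; rw [hs0]; simp
          · exact (ih i hik h1 (by omega)).1
        exact real_mul_real _ _ hsim hpim
      have hbound : ∀ i ∈ range k, (s i).re * (p (k - i)).re < -1 := by
        intro i hi
        have hik : i < k := Finset.mem_range.mp hi
        have hq : (p (k - i)).re < -1 := (hpneg (k - i) (by omega) (by omega)).2
        have hsr : 1 ≤ (s i).re := by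
          rcases Nat.eq_zero_or_pos i with h0 | h1
          · subst h0; rw [hs0]; simp
          · exact le_of_lt (ih i hik h1 (by omega)).2
        nlinarith
      set Sr : ℝ := ∑ i ∈ range k, (s i).re * (p (k - i)).re with hSr
      have hsum : (∑ i ∈ range k, s i * (∑ j, lam j ^ (k - i))) = ((Sr : ℝ) : ℂ) := by
        rw [hSr, Complex.ofReal_sum]
        exact Finset.sum_congr rfl hterm
      have hSrlt : Sr < -(k : ℝ) := by
        have := Finset.sum_lt_sum_of_nonempty (s := range k)
          (f := fun i => (s i).re * (p (k - i)).re) (g := fun _ => (-1 : ℝ))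
          (Finset.nonempty_range_iff.mpr (by omega)) hbound
        simpa [hSr] using this
      have hkC : (k : ℂ) ≠ 0 := Nat.cast_ne_zero.mpr (by omega)
      have hsk : s k = ((-Sr / k : ℝ) : ℂ) := by
        have : (k : ℂ) * s k = ((-Sr : ℝ) : ℂ) := by
          rw [hnewton, hsum]; simp
        rw [Complex.ofReal_div, Complex.ofReal_natCast, eq_div_iff hkC, mul_comm]
        exact this
      constructor
      · rw [hsk]; simp
      · rw [hsk]
        simp only [Complex.ofReal_re]
        rw [lt_div_iff₀ (by positivity : (0:ℝ) < (k:ℝ))]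
        linarith
  have hfinal := key (2 * g) (by omega) le_rfl
  -- identify coeff 0 with s (2*g)
  have hcoeff : (∏ j, (Polynomial.X - Polynomial.C (lam j))).coeff 0 = s (2 * g) := by
    rw [Polynomial.coeff_zero_eq_eval_zero, Polynomial.eval_prod]
    have hE : MvPolynomial.eval lam (MvPolynomial.esymm (Fin (2 * g)) ℂ (2 * g)) =
        ∏ j, lam j := by
      have hc : (Finset.univ : Finset (Fin (2 * g))).powersetCard (2 * g) = {Finset.univ} := by
        simpa using Finset.powersetCard_self (Finset.univ : Finset (Fin (2 * g)))
      rw [MvPolynomial.esymm, hc]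
      simp
    rw [hs]
    simp only [hE]
    have : ∀ j : Fin (2 * g), Polynomial.eval 0 (Polynomial.X - Polynomial.C (lam j))
        = (-1) * lam j := by intro j; simp
    rw [Finset.prod_congr rfl fun j _ => this j, Finset.prod_mul_distrib, Finset.prod_const]
    simp [pow_mul]
  rw [hcoeff]
  refine ⟨hfinal.1, hfinal.2, ?_⟩
  intro h
  rw [h] at hfinal
  simp at hfinal
end

section
/- Let g ≥ 2 and let λ₁,…,λ_{2g} be complex numbers with power sums p_i and signed elementary symmetric functions s_j (coefficients of ∏(x−λ_j) = x^{2g}+s₁x^{2g−1}+⋯+s_{2g}). If p_i = 0 for all odd i ≤ 2g and p_i < −2 for all even i ≤ 2g, then s_i = 0 for all odd i ≤ 2g and s_i > 1 for all even i ≤ 2g; in particular s_{2g} > 1, so s_{2g} ∉ {1, −1}. -/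
open Finset MvPolynomial

private theorem card_even_range' (n : ℕ) :
    (Finset.filter (fun i => Even i) (Finset.range (2*n))).card = n := by
  induction n with
  | zero => simp
  | succ n ih =>
    have h : 2*(n+1) = (2*n + 1) + 1 := by ring
    rw [h, Finset.range_add_one, Finset.range_add_one, Finset.filter_insert, Finset.filter_insert]
    have h1 : ¬ Even (2*n+1) := by simp [Nat.even_add_one]
    rw [if_neg h1, if_pos (even_two_mul n), Finset.card_insert_of_notMem (by simp)]
    omega



/-- If the power sums of `λ₁, …, λ_{2g}` vanish for odd `i ≤ 2g` and are real `< −2`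
for even `i ≤ 2g`, then the signed elementary symmetric functions
`s_i = coeff (2g − i)` of `∏ (X − λⱼ)` vanish for odd `i ≤ 2g` and are real `> 1`
for even `i ≤ 2g`; in particular `s_{2g} ∉ {1, −1}`. -/
theorem stmt_6 (g : ℕ) (hg : 2 ≤ g) (lam : Fin (2 * g) → ℂ)
    (p : ℕ → ℂ) (hp : ∀ i, p i = ∑ j, lam j ^ i)
    (s : ℕ → ℂ)
    (hs : ∀ h, s h = (∏ j, (Polynomial.X - Polynomial.C (lam j))).coeff (2 * g - h))
    (hodd : ∀ i, 1 ≤ i → i ≤ 2 * g → Odd i → p i = 0)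
    (heven : ∀ i, 1 ≤ i → i ≤ 2 * g → Even i → (p i).im = 0 ∧ (p i).re < -2) :
    (∀ i, 1 ≤ i → i ≤ 2 * g → Odd i → s i = 0) ∧
      (∀ i, 1 ≤ i → i ≤ 2 * g → Even i → (s i).im = 0 ∧ 1 < (s i).re) ∧
      s (2 * g) ≠ 1 ∧ s (2 * g) ≠ -1 := by
  classical
  set E : ℕ → ℂ := fun k => MvPolynomial.aeval lam (esymm (Fin (2*g)) ℂ k) with hE
  have hEk : ∀ k, E k = MvPolynomial.aeval lam (esymm (Fin (2*g)) ℂ k) := fun k => rfl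
  -- s k = (-1)^k * E k for k ≤ 2g
  have hse : ∀ k, k ≤ 2*g → s k = (-1)^k * E k := by
    intro k hk
    rw [hs, hEk]
    rw [aeval_esymm_eq_multiset_esymm]
    have h1 : (∏ j, (Polynomial.X - Polynomial.C (lam j)))
        = ((Finset.univ.val.map lam).map (fun t => Polynomial.X - Polynomial.C t)).prod := by
      simp [Multiset.map_map, Finset.prod_eq_multiset_prod]; rfl
    have hcard : Multiset.card (Finset.univ.val.map lam) = 2*g := by simp
    rw [h1, Multiset.prod_X_sub_C_coeff _ (by rw [hcard]; omega), hcard,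
      Nat.sub_sub_self hk]
  -- Newton's identity, evaluated
  have newton : ∀ k : ℕ, (k : ℂ) * E k
      = (-1)^(k+1) * ∑ i ∈ Finset.range k, (-1)^i * E i * p (k - i) := by
    intro k
    have := congrArg (MvPolynomial.aeval lam) (mul_esymm_eq_sum (Fin (2*g)) ℂ k)
    simp only [map_mul, map_natCast, map_pow, map_neg, map_one, map_sum] at this
    rw [hEk, this]
    congr 1
    have hconv : ∀ a : ℕ × ℕ,
        (-1:ℂ)^a.1 * (MvPolynomial.aeval lam) (esymm (Fin (2*g)) ℂ a.1)
            * (MvPolynomial.aeval lam) (psum (Fin (2*g)) ℂ a.2)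
          = (-1)^a.1 * E a.1 * p a.2 := by
      intro a
      rw [hEk, hp]
      congr 1
      simp [MvPolynomial.psum, map_sum]
    calc ∑ a ∈ Finset.HasAntidiagonal.antidiagonal k with a.1 < k,
          (-1:ℂ)^a.1 * (MvPolynomial.aeval lam) (esymm (Fin (2*g)) ℂ a.1)
            * (MvPolynomial.aeval lam) (psum (Fin (2*g)) ℂ a.2)
        = ∑ a ∈ Finset.HasAntidiagonal.antidiagonal k with a.1 < k, (-1)^a.1 * E a.1 * p a.2 :=
          Finset.sum_congr rfl fun a _ => hconv a
      _ = ∑ i ∈ Finset.range k, (-1)^i * E i * p (k - i) := by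
          rw [Finset.sum_filter, Finset.Nat.sum_antidiagonal_eq_sum_range_succ_mk,
            Finset.sum_range_succ]
          simp only [lt_irrefl, if_false, add_zero]
          exact Finset.sum_congr rfl fun i hi => by rw [if_pos (Finset.mem_range.mp hi)]
  -- the recurrence for s
  have hrec : ∀ k, 1 ≤ k → k ≤ 2*g →
      (k : ℂ) * s k = -∑ i ∈ Finset.range k, s i * p (k - i) := by
    intro k hk1 hk2
    rw [hse k hk2, ← mul_assoc, mul_comm ((k:ℂ)) ((-1)^k), mul_assoc, newton k,
      ← mul_assoc, ← pow_add]
    have h2 : (-1 : ℂ)^(k + (k+1)) = -1 := by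
      have : k + (k+1) = 2*k + 1 := by ring
      rw [this, pow_succ, pow_mul]
      simp
    rw [h2, neg_one_mul, neg_inj]
    refine Finset.sum_congr rfl fun i hi => ?_
    rw [hse i (le_trans (le_of_lt (Finset.mem_range.mp hi)) hk2), mul_assoc]
  have hs0 : s 0 = 1 := by
    rw [hse 0 (by omega)]
    simp [hE, esymm_zero]
  -- main induction
  have main : ∀ k, k ≤ 2*g → (Odd k → s k = 0) ∧
      (Even k → (s k).im = 0 ∧ 1 ≤ (s k).re ∧ (k ≠ 0 → 1 < (s k).re)) := by
    intro k
    induction k using Nat.strong_induction_on with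
    | _ k IH =>
      intro hk2
      rcases Nat.eq_zero_or_pos k with hk0 | hk1
      · subst hk0
        simp [hs0]
      by_cases hodd' : Odd k
      · -- odd case: s k = 0
        constructor
        · intro _
          have hrk := hrec k hk1 hk2
          have hsum : ∑ i ∈ Finset.range k, s i * p (k - i) = 0 := by
            refine Finset.sum_eq_zero fun i hi => ?_
            have hik : i < k := Finset.mem_range.mp hi
            by_cases hi' : Odd i
            · have hi1 : 1 ≤ i := hi'.pos
              rw [((IH i hik) (by omega)).1 hi', zero_mul]
            · have hie : Even i := Nat.not_odd_iff_even.mp hi'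
              have : Odd (k - i) := by
                rcases hodd' with ⟨m, hm⟩; rcases hie with ⟨n, hn⟩
                exact ⟨m - n, by omega⟩
              rw [hodd (k - i) (by omega) (by omega) this, mul_zero]
          rw [hsum, neg_zero] at hrk
          have : (k : ℂ) ≠ 0 := Nat.cast_ne_zero.mpr (by omega)
          exact (mul_eq_zero.mp hrk).resolve_left this
        · intro he
          exact absurd he (Nat.not_even_iff_odd.mpr hodd')
      · -- even case
        have hke : Even k := Nat.not_odd_iff_even.mp hodd'
        have key : (s k).im = 0 ∧ 1 < (s k).re := by
          have hrk := hrec k hk1 hk2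
          rw [← Finset.sum_neg_distrib] at hrk
          set T : ℕ → ℂ := fun i => -(s i * p (k - i)) with hT
          -- properties of terms
          have hTodd : ∀ i ∈ Finset.range k, Odd i → T i = 0 := by
            intro i hi hio
            have hik : i < k := Finset.mem_range.mp hi
            rw [hT]
            simp only
            rw [((IH i hik) (by omega)).1 hio, zero_mul, neg_zero]
          have hTeven : ∀ i ∈ Finset.range k, Even i → (T i).im = 0 ∧ 2 < (T i).re := by
            intro i hi hie
            have hik : i < k := Finset.mem_range.mp hi
            have hki : Even (k - i) := by
              rcases hke with ⟨m, hm⟩; rcases hie with ⟨n, hn⟩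
              exact ⟨m - n, by omega⟩
            have hp' := heven (k - i) (by omega) (by omega) hki
            have hsi := ((IH i hik) (by omega)).2 hie
            have him : (s i * p (k - i)).im = (s i).re * (p (k-i)).im + (s i).im * (p (k-i)).re := Complex.mul_im _ _
            have hre : (s i * p (k - i)).re = (s i).re * (p (k-i)).re - (s i).im * (p (k-i)).im := Complex.mul_re _ _
            constructor
            · rw [hT]; simp only [Complex.neg_im, him, hsi.1, hp'.1]; ring
            · rw [hT]
              simp only [Complex.neg_re, hre, hsi.1, hp'.1]
              have h1 : 1 ≤ (s i).re := hsi.2.1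
              nlinarith [hp'.2]
          have hTim : ∀ i ∈ Finset.range k, (T i).im = 0 := by
            intro i hi
            by_cases hie : Even i
            · exact (hTeven i hi hie).1
            · rw [hTodd i hi (Nat.not_even_iff_odd.mp hie)]; simp
          -- imaginary part
          have him0 : (s k).im = 0 := by
            have h1 : ((k : ℂ) * s k).im = (k : ℝ) * (s k).im := by
              simp [Complex.mul_im]
            have h2 : ((k : ℂ) * s k).im = 0 := by
              rw [hrk, Complex.im_sum]
              exact Finset.sum_eq_zero hTim
            rw [h1] at h2
            have : (k : ℝ) ≠ 0 := Nat.cast_ne_zero.mpr (by omega)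
            exact (mul_eq_zero.mp h2).resolve_left this
          refine ⟨him0, ?_⟩
          -- real part
          have hsplit := Finset.sum_filter_add_sum_filter_not (Finset.range k)
            (fun i => Even i) (fun i => (T i).re)
          have hodd0 : ∑ i ∈ Finset.range k with ¬ Even i, (T i).re = 0 :=
            Finset.sum_eq_zero fun i hi => by
              rw [hTodd i (Finset.mem_filter.mp hi).1
                (Nat.not_even_iff_odd.mp (Finset.mem_filter.mp hi).2)]; simp
          obtain ⟨m, hm⟩ := hke
          have hkm : k = 2 * m := by omega
          have hcard : (Finset.range k |>.filter (fun i => Even i)).card = m := by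
            rw [hkm]; exact card_even_range' m
          have hne : (Finset.range k |>.filter (fun i => Even i)).Nonempty :=
            ⟨0, Finset.mem_filter.mpr ⟨Finset.mem_range.mpr hk1, Even.zero⟩⟩
          have hlt : (2 : ℝ) * m < ∑ i ∈ Finset.range k with Even i, (T i).re := by
            calc (2:ℝ) * m = ∑ _i ∈ Finset.range k with Even _i, (2:ℝ) := by
                  rw [Finset.sum_const, hcard, nsmul_eq_mul]; ring
              _ < _ := Finset.sum_lt_sum_of_nonempty hne fun i hi =>
                  (hTeven i (Finset.mem_filter.mp hi).1 (Finset.mem_filter.mp hi).2).2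
          have hretot : ((k:ℂ) * s k).re = ∑ i ∈ Finset.range k, (T i).re := by
            rw [hrk, Complex.re_sum]
          have hre2 : ((k:ℂ) * s k).re = (k : ℝ) * (s k).re := by
            simp [Complex.mul_re]
          rw [hre2] at hretot
          have : (k : ℝ) < (k:ℝ) * (s k).re := by
            rw [hretot, ← hsplit, hodd0, add_zero]
            calc (k:ℝ) = 2 * m := by rw [hkm]; push_cast; ring
              _ < _ := hlt
          have hkpos : (0:ℝ) < (k:ℝ) := by positivity
          nlinarith
        exact ⟨fun ho => absurd ho hodd', fun _ => ⟨key.1, le_of_lt key.2, fun _ => key.2⟩⟩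
  refine ⟨fun i h1 h2 ho => (main i h2).1 ho,
    fun i h1 h2 he => ⟨((main i h2).2 he).1, ((main i h2).2 he).2.2 (by omega)⟩, ?_, ?_⟩
  · intro hcon
    have := ((main (2*g) le_rfl).2 (even_two_mul g)).2.2 (by omega)
    rw [hcon] at this
    simp at this
  · intro hcon
    have := ((main (2*g) le_rfl).2 (even_two_mul g)).2.2 (by omega)
    rw [hcon] at this
    norm_num at this
end

section
/- Let g ≥ 2 and p be positive integers with p₁ := p. Suppose there exist pairwise-coprime positive integers p₁, p₂, p₃ each dividing n := 2g − 2 + p₁ + p₂ + p₃. Then T := (2g − 2 + p₁ + p₂ + p₃)/n − 3 + 2 = 0 and the Harvey conditions hold: setting m_i = n/p_i, we have lcm of any two of m₁, m₂, m₃ equals lcm(m₁,m₂,m₃) = n, and if 2^a ∥ n then the number of i with 2^a | m_i is even. -/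
lemma stmt9_aux_lcm (n p q : ℕ) (hn : 0 < n) (hp : 0 < p) (hq : 0 < q)
    (c : Nat.Coprime p q) (dp : p ∣ n) (dq : q ∣ n) :
    Nat.lcm (n / p) (n / q) = n := by
  have hm1 : n / p ∣ n := Nat.div_dvd_of_dvd dp
  have hm2 : n / q ∣ n := Nat.div_dvd_of_dvd dq
  obtain ⟨t, ht⟩ := Nat.lcm_dvd hm1 hm2
  have hm1pos : 0 < n / p := Nat.div_pos (Nat.le_of_dvd hn dp) hp
  have hm2pos : 0 < n / q := Nat.div_pos (Nat.le_of_dvd hn dq) hq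
  have tp : t ∣ p := by
    obtain ⟨s, hs⟩ := Nat.dvd_lcm_left (n / p) (n / q)
    have h1 : n / p * p = n := Nat.div_mul_cancel dp
    have h2 : n / p * (s * t) = n / p * p := by
      rw [← mul_assoc, ← hs, ← ht, h1]
    exact ⟨s, by rw [Nat.eq_of_mul_eq_mul_left hm1pos h2.symm, mul_comm]⟩
  have tq : t ∣ q := by
    obtain ⟨s, hs⟩ := Nat.dvd_lcm_right (n / p) (n / q)
    have h1 : n / q * q = n := Nat.div_mul_cancel dq
    have h2 : n / q * (s * t) = n / q * q := by
      rw [← mul_assoc, ← hs, ← ht, h1]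
    exact ⟨s, by rw [Nat.eq_of_mul_eq_mul_left hm2pos h2.symm, mul_comm]⟩
  have t1 : t = 1 := Nat.eq_one_of_dvd_one (c ▸ Nat.dvd_gcd tp tq)
  rw [t1, mul_one] at ht
  exact ht.symm

lemma stmt9_aux_odd (n p a : ℕ) (hodd : ¬ 2 ∣ p) (dp : p ∣ n) (ha : 2 ^ a ∣ n) :
    2 ^ a ∣ n / p := by
  have c : Nat.Coprime (2 ^ a) p :=
    Nat.Coprime.pow_left _ ((Nat.Prime.coprime_iff_not_dvd Nat.prime_two).mpr hodd)
  have h1 : n / p * p = n := Nat.div_mul_cancel dp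
  rw [← h1] at ha
  exact c.dvd_of_dvd_mul_right ha

lemma stmt9_aux_even (n p a : ℕ) (hp : 0 < p) (heven : 2 ∣ p) (dp : p ∣ n)
    (ha : ¬ 2 ^ (a + 1) ∣ n) : ¬ 2 ^ a ∣ n / p := by
  intro h
  apply ha
  have h1 : n / p * p = n := Nat.div_mul_cancel dp
  obtain ⟨k, hk⟩ := h
  obtain ⟨l, hl⟩ := heven
  refine ⟨k * l, ?_⟩
  rw [← h1, hk, hl, pow_succ]; ring

/-- If `p₁, p₂, p₃` are pairwise coprime positive integers, each dividing
`n = 2g − 2 + p₁ + p₂ + p₃` (with `g ≥ 2`), then with `mᵢ = n / pᵢ` the Harvey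
conditions hold: the lcm of any two of the `mᵢ` equals `lcm(m₁,m₂,m₃) = n`, and if
`2^a ∥ n` (with `a > 0`) then the number of `i` with `2^a ∣ mᵢ` is even. -/
theorem stmt_9 (g p₁ p₂ p₃ : ℕ) (hg : 2 ≤ g)
    (h1 : 0 < p₁) (h2 : 0 < p₂) (h3 : 0 < p₃)
    (c12 : Nat.Coprime p₁ p₂) (c13 : Nat.Coprime p₁ p₃) (c23 : Nat.Coprime p₂ p₃)
    (d1 : p₁ ∣ 2 * g - 2 + p₁ + p₂ + p₃) (d2 : p₂ ∣ 2 * g - 2 + p₁ + p₂ + p₃)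
    (d3 : p₃ ∣ 2 * g - 2 + p₁ + p₂ + p₃) :
    let n := 2 * g - 2 + p₁ + p₂ + p₃
    let m₁ := n / p₁
    let m₂ := n / p₂
    let m₃ := n / p₃
    Nat.lcm m₁ (Nat.lcm m₂ m₃) = n ∧
      Nat.lcm m₁ m₂ = n ∧ Nat.lcm m₁ m₃ = n ∧ Nat.lcm m₂ m₃ = n ∧
      ∀ a : ℕ, 0 < a → 2 ^ a ∣ n → ¬ 2 ^ (a + 1) ∣ n →
        Even ((if 2 ^ a ∣ m₁ then 1 else 0) + (if 2 ^ a ∣ m₂ then 1 else 0) +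
          (if 2 ^ a ∣ m₃ then 1 else 0)) := by
  intro n m₁ m₂ m₃
  have hn : 0 < n := by have : 0 < p₁ := h1; omega
  have L12 : Nat.lcm m₁ m₂ = n := stmt9_aux_lcm n p₁ p₂ hn h1 h2 c12 d1 d2
  have L13 : Nat.lcm m₁ m₃ = n := stmt9_aux_lcm n p₁ p₃ hn h1 h3 c13 d1 d3
  have L23 : Nat.lcm m₂ m₃ = n := stmt9_aux_lcm n p₂ p₃ hn h2 h3 c23 d2 d3
  have L123 : Nat.lcm m₁ (Nat.lcm m₂ m₃) = n := by
    rw [L23]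
    exact Nat.dvd_antisymm (Nat.lcm_dvd (Nat.div_dvd_of_dvd d1) dvd_rfl)
      (Nat.dvd_lcm_right _ _)
  refine ⟨L123, L12, L13, L23, ?_⟩
  intro a ha hdvd hndvd
  have h2n : 2 ∣ n := (dvd_pow_self 2 ha.ne').trans hdvd
  -- determine parities
  by_cases e1 : 2 ∣ p₁
  · have o2 : ¬ 2 ∣ p₂ := fun h => by
      have := Nat.dvd_gcd e1 h; rw [c12] at this; omega
    have o3 : ¬ 2 ∣ p₃ := fun h => by
      have := Nat.dvd_gcd e1 h; rw [c13] at this; omega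
    rw [if_neg (stmt9_aux_even n p₁ a h1 e1 d1 hndvd),
        if_pos (stmt9_aux_odd n p₂ a o2 d2 hdvd),
        if_pos (stmt9_aux_odd n p₃ a o3 d3 hdvd)]
    decide
  · by_cases e2 : 2 ∣ p₂
    · have o3 : ¬ 2 ∣ p₃ := fun h => by
        have := Nat.dvd_gcd e2 h; rw [c23] at this; omega
      rw [if_pos (stmt9_aux_odd n p₁ a e1 d1 hdvd),
          if_neg (stmt9_aux_even n p₂ a h2 e2 d2 hndvd),
          if_pos (stmt9_aux_odd n p₃ a o3 d3 hdvd)]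
      decide
    · by_cases e3 : 2 ∣ p₃
      · rw [if_pos (stmt9_aux_odd n p₁ a e1 d1 hdvd),
            if_pos (stmt9_aux_odd n p₂ a e2 d2 hdvd),
            if_neg (stmt9_aux_even n p₃ a h3 e3 d3 hndvd)]
        decide
      · -- all odd: n is odd, contradiction with 2 ∣ n
        exfalso
        have : n = 2 * g - 2 + p₁ + p₂ + p₃ := rfl
        omega
end

section
/- Let n ≥ 3 and g ≥ 2 be integers and suppose complex numbers λ₁,…,λ_{2g} have power sums p_i satisfying p_i = 2 − n if n | i and p_i = 2 otherwise, for all i ≤ v where v ≤ 2g. Then the signed elementary symmetric functions s_i (coefficients of ∏(x−λⱼ) = x^{2g}+s₁x^{2g−1}+⋯) satisfy, for all i ≤ v: s_i = −2 if i ≡ 1 (mod n), s_i = 1 if i ≡ 0 or 2 (mod n), and s_i = 0 otherwise. -/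
open Finset

/-- the target value function -/
noncomputable def tval (n i : ℕ) : ℂ :=
  if i % n = 1 then -2 else if i % n = 0 ∨ i % n = 2 then 1 else 0

lemma tval_mod (n i : ℕ) : tval n (i % n) = tval n i := by
  simp [tval, Nat.mod_mod_of_dvd _ (dvd_refl n)]

lemma sumT (n : ℕ) (hn : 3 ≤ n) (m : ℕ) :
    ∑ j ∈ range m, tval n j =
      if m % n = 1 then 1 else if m % n = 2 then -1 else 0 := by
  induction m with
  | zero => simp
  | succ m ih =>
    rw [Finset.sum_range_succ, ih]
    have hr : m % n < n := Nat.mod_lt _ (by omega)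
    have h1 : (m + 1) % n = if m % n + 1 = n then 0 else m % n + 1 := by
      rw [Nat.add_mod]
      rcases eq_or_ne (m % n + 1) n with h | h
      · simp [Nat.mod_eq_of_lt hn, h]
      · rw [Nat.mod_eq_of_lt (by omega : (1:ℕ) < n),
          Nat.mod_eq_of_lt (by omega : m % n + 1 < n), if_neg h]
    unfold tval
    rw [h1]
    rcases Nat.lt_or_ge (m % n) 3 with h3 | h3
    · interval_cases h : m % n <;> split_ifs <;> simp_all <;> first | omega | norm_num
    · split_ifs <;> simp_all <;> omega

lemma sumD (n : ℕ) (hn : 3 ≤ n) (i : ℕ) :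
    ∑ j ∈ range i, (if n ∣ (i - j) then tval n j else 0) =
      ((i / n : ℕ) : ℂ) * tval n i := by
  rw [← Finset.sum_filter]
  have hcongr : ∀ j ∈ (range i).filter (fun j => n ∣ i - j), tval n j = tval n i := by
    intro j hj
    rw [mem_filter, mem_range] at hj
    obtain ⟨hji, k, hk⟩ := hj
    have : i = j + n * k := by omega
    rw [← tval_mod n j, ← tval_mod n i, this, Nat.add_mul_mod_self_left]
  rw [Finset.sum_congr rfl hcongr, Finset.sum_const, nsmul_eq_mul]
  congr 1
  norm_cast
  have hcard : ((range i).filter (fun j => n ∣ i - j)).card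
      = ((Finset.Ioc 0 i).filter (fun x => n ∣ x)).card := by
    apply Finset.card_nbij' (fun j => i - j) (fun x => i - x)
    · intro a ha
      beta_reduce
      rw [Finset.mem_coe, mem_filter, mem_range] at ha
      rw [Finset.mem_coe, mem_filter, mem_Ioc]
      exact ⟨⟨by omega, by omega⟩, ha.2⟩
    · intro a ha
      beta_reduce
      rw [Finset.mem_coe, mem_filter, mem_Ioc] at ha
      rw [Finset.mem_coe, mem_filter, mem_range]
      constructor
      · omega
      · have : i - (i - a) = a := by omega
        rw [this]; exact ha.2
    · intro a ha
      beta_reduce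
      rw [Finset.mem_coe, mem_filter, mem_range] at ha
      omega
    · intro a ha
      beta_reduce
      rw [Finset.mem_coe, mem_filter, mem_Ioc] at ha
      omega
  rw [hcard, Nat.Ioc_filter_dvd_card_eq_div]

lemma keynum (n i : ℕ) (hn : 3 ≤ n) :
    2 * (if i % n = 1 then (1:ℂ) else if i % n = 2 then -1 else 0)
      - (n:ℂ) * (((i / n : ℕ) : ℂ) * tval n i) = -(i:ℂ) * tval n i := by
  have hdm : (i:ℂ) = (n:ℂ) * ((i/n : ℕ):ℂ) + ((i % n : ℕ):ℂ) := by
    rw [← Nat.cast_mul, ← Nat.cast_add, Nat.div_add_mod]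
  unfold tval
  rcases Nat.lt_or_ge (i % n) 3 with h3 | h3
  · interval_cases h : i % n <;> simp_all <;> ring
  · split_ifs <;> simp_all

lemma newton_c (N : ℕ) (lam : Fin N → ℂ) (k : ℕ) :
    (k:ℂ) * (Finset.univ.val.map lam).esymm k =
      (-1)^(k+1) * ∑ j ∈ range k,
        (-1)^j * (Finset.univ.val.map lam).esymm j * (∑ x, lam x ^ (k - j)) := by
  have h := congrArg (MvPolynomial.aeval lam) (MvPolynomial.mul_esymm_eq_sum (Fin N) ℂ k)
  simp only [map_mul, map_sum, map_pow, map_neg, map_one, map_natCast,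
    MvPolynomial.aeval_esymm_eq_multiset_esymm, MvPolynomial.psum,
    MvPolynomial.aeval_X] at h
  rw [h]
  congr 1
  rw [Finset.sum_filter, Finset.Nat.sum_antidiagonal_eq_sum_range_succ_mk,
    Finset.sum_range_succ, if_neg (lt_irrefl k), add_zero]
  apply Finset.sum_congr rfl
  intro j hj
  rw [if_pos (mem_range.mp hj)]

/-- If `n ≥ 3`, `g ≥ 2`, `v ≤ 2g` and the power sums of `λ₁,…,λ_{2g}` satisfy
`pᵢ = 2 − n` when `n ∣ i` and `pᵢ = 2` otherwise, for `1 ≤ i ≤ v`, then the signed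
elementary symmetric functions `sᵢ = coeff (2g − i)` of `∏(X − λⱼ)` satisfy, for
`1 ≤ i ≤ v`: `sᵢ = −2` if `i ≡ 1 (mod n)`, `sᵢ = 1` if `i ≡ 0, 2 (mod n)`, and
`sᵢ = 0` otherwise. -/
theorem stmt_15 (g n v : ℕ) (hg : 2 ≤ g) (hn : 3 ≤ n) (hv : v ≤ 2 * g)
    (lam : Fin (2 * g) → ℂ)
    (p : ℕ → ℂ) (hp : ∀ i, p i = ∑ j, lam j ^ i)
    (s : ℕ → ℂ)
    (hs : ∀ h, s h = (∏ j, (Polynomial.X - Polynomial.C (lam j))).coeff (2 * g - h))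
    (hpv : ∀ i, 1 ≤ i → i ≤ v → p i = if n ∣ i then (2 - (n : ℂ)) else 2) :
    ∀ i, 1 ≤ i → i ≤ v →
      s i = if i % n = 1 then -2 else if i % n = 0 ∨ i % n = 2 then 1 else 0 := by
  have hcard : Multiset.card (Finset.univ.val.map lam) = 2 * g := by simp
  have hse : ∀ h, h ≤ 2*g → s h = (-1)^h * (Finset.univ.val.map lam).esymm h := by
    intro h hh
    rw [hs h, Finset.prod_eq_multiset_prod]
    have hmm : Multiset.map (fun j => Polynomial.X - Polynomial.C (lam j)) Finset.univ.val
        = Multiset.map (fun t => Polynomial.X - Polynomial.C t)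
            (Finset.univ.val.map lam) := by
      rw [Multiset.map_map]
      rfl
    rw [hmm, Multiset.prod_X_sub_C_coeff (Finset.univ.val.map lam)
      (show 2*g - h ≤ _ by rw [hcard]; omega), hcard]
    congr 2 <;> omega
  have hnewton : ∀ k, 1 ≤ k → k ≤ 2*g →
      (k:ℂ) * s k = - ∑ j ∈ range k, s j * p (k - j) := by
    intro k hk1 hk2
    have h := newton_c (2*g) lam k
    have he : ∀ m, m ≤ 2*g → (Finset.univ.val.map lam).esymm m = (-1)^m * s m := by
      intro m hm
      rw [hse m hm, ← mul_assoc, ← pow_add, Even.neg_one_pow (Even.add_self m), one_mul]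
    have hsum : ∀ j ∈ range k,
        ((-1:ℂ))^j * (Finset.univ.val.map lam).esymm j * (∑ x, lam x ^ (k - j))
          = s j * p (k - j) := by
      intro j hj
      have hj' : j < k := mem_range.mp hj
      rw [he j (by omega), hp (k - j), ← mul_assoc, ← pow_add,
        Even.neg_one_pow (Even.add_self j), one_mul]
    rw [Finset.sum_congr rfl hsum, he k hk2] at h
    rcases Nat.even_or_odd k with hek | hek
    · rw [Even.neg_one_pow hek, Odd.neg_one_pow (Even.add_one hek)] at h
      linear_combination h
    · rw [Odd.neg_one_pow hek, Even.neg_one_pow (Odd.add_one hek)] at h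
      linear_combination -h
  have hs0 : s 0 = 1 := by
    rw [hse 0 (by omega)]
    simp [Multiset.esymm]
  have main : ∀ i, i ≤ v → s i = tval n i := by
    intro i
    induction i using Nat.strong_induction_on with
    | _ i ih =>
      intro hiv
      rcases Nat.eq_zero_or_pos i with rfl | hi1
      · rw [hs0]; simp [tval]
      · have hky := hnewton i hi1 (le_trans hiv hv)
        have hsum : ∑ j ∈ range i, s j * p (i - j)
            = ∑ j ∈ range i, tval n j * (2 - (if n ∣ (i - j) then (n:ℂ) else 0)) := by
          apply Finset.sum_congr rfl
          intro j hj
          have hj' : j < i := mem_range.mp hj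
          have h1 : s j = tval n j := by
            rcases Nat.eq_zero_or_pos j with rfl | hj1
            · rw [hs0]; simp [tval]
            · exact ih j hj' (by omega)
          have h2 : p (i - j) = 2 - (if n ∣ (i - j) then (n:ℂ) else 0) := by
            rw [hpv (i - j) (by omega) (by omega)]
            split_ifs <;> ring
          rw [h1, h2]
        have hexp : ∑ j ∈ range i, tval n j * (2 - (if n ∣ (i - j) then (n:ℂ) else 0))
            = 2 * (∑ j ∈ range i, tval n j)
              - (n:ℂ) * ∑ j ∈ range i, (if n ∣ (i - j) then tval n j else 0) := by
          rw [Finset.mul_sum, Finset.mul_sum, ← Finset.sum_sub_distrib]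
          apply Finset.sum_congr rfl
          intro j _
          split_ifs <;> ring
        rw [hsum, hexp, sumT n hn i, sumD n hn i] at hky
        have hkey := keynum n i hn
        have hfin : (i:ℂ) * s i = (i:ℂ) * tval n i := by
          rw [hky]; linear_combination -hkey
        exact mul_left_cancel₀ (Nat.cast_ne_zero.mpr (by omega)) hfin
  intro i hi1 hiv
  rw [main i hiv]
  rfl
end

section
/- Let n ≥ 3 be even and g ≥ 2, and suppose complex numbers λ₁,…,λ_{2g} have power sums p_i satisfying, for all i ≤ v (with v ≤ 2g): p_i = 2 − n if n | i, p_i = 0 if i is odd, and p_i = 2 otherwise. Then the signed elementary symmetric coefficients satisfy, for i ≤ v: s_i = −1 if i ≡ 2 (mod n), s_i = 1 if i ≡ 0 (mod n), and s_i = 0 otherwise. -/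
open Finset MvPolynomial

noncomputable def stmt16P (n k : ℕ) : ℂ := if n ∣ k then (2 - (n : ℂ)) else if Odd k then 0 else 2

noncomputable def stmt16f (n k : ℕ) : ℂ := if k % n = 2 then -1 else if k % n = 0 then 1 else 0

lemma stmt16P_def (n k : ℕ) :
    stmt16P n k = if n ∣ k then (2 - (n : ℂ)) else if Odd k then 0 else 2 := rfl

lemma stmt16f_def (n k : ℕ) :
    stmt16f n k = if k % n = 2 then -1 else if k % n = 0 then 1 else 0 := rfl

lemma stmt16P_congr {n k k' : ℕ} (hne : Even n) (h : k % n = k' % n) :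
    stmt16P n k = stmt16P n k' := by
  obtain ⟨m, rfl⟩ := hne
  have h2 : k % 2 = k' % 2 := by
    have d : 2 ∣ m + m := ⟨m, by ring⟩
    rw [← Nat.mod_mod_of_dvd k d, ← Nat.mod_mod_of_dvd k' d, h]
  unfold stmt16P
  simp only [Nat.dvd_iff_mod_eq_zero, Nat.odd_iff, h, h2]

lemma stmt16_sum_ind (n i r : ℕ) (hn : 0 < n) (hr : r < n) (hri : r < i) (Q : ℕ → ℂ)
    (hQ : ∀ k k', k % n = k' % n → Q k = Q k') :
    ∑ j ∈ range i, (if j % n = r then (1 : ℂ) else 0) * Q (i - j)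
      = ((i - 1 - r) / n + 1 : ℕ) * Q (i - r) := by
  simp only [ite_mul, one_mul, zero_mul]
  rw [← Finset.sum_filter]
  have himg : (range i).filter (fun j => j % n = r)
      = (range ((i - 1 - r) / n + 1)).image (fun m => r + n * m) := by
    ext j
    simp only [mem_filter, mem_range, mem_image]
    constructor
    · rintro ⟨hj, hjr⟩
      refine ⟨j / n, ?_, ?_⟩
      · have h1 : n * (j / n) + r = j := by rw [← hjr]; exact Nat.div_add_mod j n
        have h2 : n * (j / n) ≤ i - 1 - r := by omega
        have := (Nat.le_div_iff_mul_le (k := n) (x := j / n) (y := i - 1 - r) hn).mpr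
          (by rw [Nat.mul_comm]; omega)
        omega
      · have h1 : n * (j / n) + r = j := by rw [← hjr]; exact Nat.div_add_mod j n
        omega
    · rintro ⟨m, hm, rfl⟩
      have h2 : m ≤ (i - 1 - r) / n := by omega
      have h3 : n * m ≤ i - 1 - r := by
        calc n * m ≤ n * ((i - 1 - r)/n) := Nat.mul_le_mul_left n h2
        _ ≤ i - 1 - r := Nat.mul_div_le _ _
      constructor
      · omega
      · rw [Nat.add_mul_mod_self_left, Nat.mod_eq_of_lt hr]
  rw [himg, Finset.sum_image (by intro a _ b _ h; dsimp only at h; exact Nat.eq_of_mul_eq_mul_left hn (by omega))]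
  have hconst : ∀ m ∈ range ((i - 1 - r) / n + 1), Q (i - (r + n * m)) = Q (i - r) := by
    intro m hm
    simp only [mem_range] at hm
    have h3 : n * m ≤ i - 1 - r := by
      have h2 : m ≤ (i - 1 - r) / n := by omega
      calc n * m ≤ n * ((i - 1 - r)/n) := Nat.mul_le_mul_left n h2
      _ ≤ i - 1 - r := Nat.mul_div_le _ _
    apply hQ
    have : i - (r + n * m) = (i - r) - n * m := by omega
    rw [this]
    exact Nat.sub_mul_mod (by omega)
  rw [Finset.sum_congr rfl hconst, Finset.sum_const, card_range, nsmul_eq_mul]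

set_option linter.unreachableTactic false in
set_option linter.unusedTactic false in
lemma stmt16_key (n i : ℕ) (hn : 4 ≤ n) (hne : Even n) (hi : 1 ≤ i) :
    ∑ j ∈ range i, stmt16f n j * stmt16P n (i - j) = -(i : ℂ) * stmt16f n i := by
  have hn0 : 0 < n := by omega
  have h2n : 2 ∣ n := hne.two_dvd
  have hQ : ∀ k k', k % n = k' % n → stmt16P n k = stmt16P n k' := fun _ _ h => stmt16P_congr hne h
  have hsplit : ∀ j, stmt16f n j
      = (if j % n = 0 then (1:ℂ) else 0) - (if j % n = 2 then (1:ℂ) else 0) := by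
    intro j
    rw [stmt16f_def]
    rcases eq_or_ne (j % n) 2 with h | h <;> rcases eq_or_ne (j % n) 0 with h0 | h0 <;>
      simp [h, h0] <;> omega
  have hsum : ∑ j ∈ range i, stmt16f n j * stmt16P n (i - j)
      = (∑ j ∈ range i, (if j % n = 0 then (1:ℂ) else 0) * stmt16P n (i - j))
        - ∑ j ∈ range i, (if j % n = 2 then (1:ℂ) else 0) * stmt16P n (i - j) := by
    rw [← Finset.sum_sub_distrib]
    exact Finset.sum_congr rfl fun j _ => by rw [hsplit j, sub_mul]
  have hS0 : ∑ j ∈ range i, (if j % n = 0 then (1:ℂ) else 0) * stmt16P n (i - j)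
      = ((i - 1) / n + 1 : ℕ) * stmt16P n i := by
    have := stmt16_sum_ind n i 0 hn0 (by omega) (by omega) _ hQ
    simpa using this
  have hS2 : ∑ j ∈ range i, (if j % n = 2 then (1:ℂ) else 0) * stmt16P n (i - j)
      = if 3 ≤ i then ((i - 3) / n + 1 : ℕ) * stmt16P n (i - 2) else 0 := by
    rcases le_or_gt 3 i with h3 | h3
    · rw [if_pos h3]
      have := stmt16_sum_ind n i 2 hn0 (by omega) (by omega) _ hQ
      have e : i - 1 - 2 = i - 3 := by omega
      rwa [e] at this
    · rw [if_neg (by omega)]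
      apply Finset.sum_eq_zero
      intro j hj
      simp only [mem_range] at hj
      have : j % n = j := Nat.mod_eq_of_lt (by omega)
      rw [this, if_neg (by omega), zero_mul]
  rw [hsum, hS0, hS2]
  set r := i % n with hr
  set q := i / n with hq
  have hiq : n * q + r = i := Nat.div_add_mod i n
  have hrn : r < n := Nat.mod_lt _ hn0
  have hi2 : i % 2 = r % 2 := (Nat.mod_mod_of_dvd i h2n).symm
  rcases Nat.even_or_odd r with hre | hro
  swap
  · -- r odd
    have hPi : stmt16P n i = 0 := by
      rw [stmt16P_def, if_neg, if_pos]
      · rw [Nat.odd_iff]; rw [Nat.odd_iff] at hro; omega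
      · rw [Nat.dvd_iff_mod_eq_zero, ← hr]; rw [Nat.odd_iff] at hro; omega
    have hfi : stmt16f n i = 0 := by
      rw [stmt16f_def, if_neg, if_neg]
      · rw [Nat.odd_iff] at hro; omega
      · rw [Nat.odd_iff] at hro; omega
    rw [hPi, hfi]
    rcases le_or_gt 3 i with h3 | h3
    · rw [if_pos h3]
      have hPi2 : stmt16P n (i - 2) = 0 := by
        rw [stmt16P_def, if_neg, if_pos]
        · rw [Nat.odd_iff]; rw [Nat.odd_iff] at hro; omega
        · intro hd
          have := hd.mul_left 1
          have h2 : 2 ∣ i - 2 := dvd_trans h2n hd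
          rw [Nat.odd_iff] at hro; omega
      rw [hPi2]; ring
    · rw [if_neg (by omega)]; ring
  · -- r even
    rw [Nat.even_iff] at hre
    rcases eq_or_ne r 0 with h0 | h0
    · -- r = 0 : n ∣ i
      have hq1 : 1 ≤ q := by
        rcases Nat.eq_zero_or_pos q with h | h
        · exfalso; have : n * q = 0 := by rw [h, Nat.mul_zero]
          omega
        · exact h
      have hmul : n * (q - 1) + n = n * q := by
        rw [← Nat.mul_succ]; congr 1; omega
      have ha : (i - 1) / n = q - 1 := by
        have : i - 1 = n * (q - 1) + (n - 1) := by omega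
        rw [this, Nat.mul_add_div hn0, Nat.div_eq_of_lt (by omega), add_zero]
      have hb : (i - 3) / n = q - 1 := by
        have : i - 3 = n * (q - 1) + (n - 3) := by omega
        rw [this, Nat.mul_add_div hn0, Nat.div_eq_of_lt (by omega), add_zero]
      have hPi : stmt16P n i = 2 - n := by
        rw [stmt16P_def, if_pos (by rw [Nat.dvd_iff_mod_eq_zero, ← hr, h0])]
      have hPi2 : stmt16P n (i - 2) = 2 := by
        rw [stmt16P_def, if_neg, if_neg]
        · rw [Nat.odd_iff]; omega
        · intro hd
          obtain ⟨c, hc⟩ := hd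
          have hmul2 : n * c + 2 = n * q := by omega
          have : n ∣ 2 := ⟨q - c, by
            rcases Nat.lt_or_ge c q with h | h
            · have : n * (q - c) = n * q - n * c := by rw [Nat.mul_sub]
              omega
            · have := Nat.mul_le_mul_left n h; omega⟩
          have := Nat.le_of_dvd (by omega) this
          omega
      have hfi : stmt16f n i = 1 := by rw [stmt16f_def, if_neg (by omega), if_pos (by omega)]
      rw [hPi, hPi2, hfi, if_pos (by omega), ha, hb]
      have hic : (i : ℂ) = n * q := by rw [← hiq]; push_cast; rw [h0]; ring
      have hqc : ((q - 1 + 1 : ℕ) : ℂ) = q := by rw [Nat.sub_add_cancel hq1]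
      rw [hqc, hic]; ring
    rcases eq_or_ne r 2 with h2 | h2
    · -- r = 2
      have ha : (i - 1) / n = q := by
        have : i - 1 = n * q + 1 := by omega
        rw [this, Nat.mul_add_div hn0, Nat.div_eq_of_lt (by omega), add_zero]
      have hPi : stmt16P n i = 2 := by
        rw [stmt16P_def, if_neg, if_neg]
        · rw [Nat.odd_iff]; omega
        · rw [Nat.dvd_iff_mod_eq_zero, ← hr]; omega
      have hfi : stmt16f n i = -1 := by rw [stmt16f_def, if_pos (by omega)]
      rcases Nat.eq_zero_or_pos q with hq0 | hq1
      · -- i = 2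
        have hnq0 : n * q = 0 := by rw [hq0, Nat.mul_zero]
        have hi2' : i = 2 := by omega
        rw [hPi, hfi, if_neg (by omega), ha, hi2', hq0]
        norm_num
      · have hmul : n * (q - 1) + n = n * q := by rw [← Nat.mul_succ]; congr 1; omega
        have hb : (i - 3) / n = q - 1 := by
          have : i - 3 = n * (q - 1) + (n - 1) := by omega
          rw [this, Nat.mul_add_div hn0, Nat.div_eq_of_lt (by omega), add_zero]
        have hPi2 : stmt16P n (i - 2) = 2 - n := by
          rw [stmt16P_def, if_pos ⟨q, by omega⟩]
        rw [hPi, hPi2, hfi, if_pos (by omega), ha, hb]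
        have hic : (i : ℂ) = n * q + 2 := by rw [← hiq, h2]; push_cast; ring
        have hqc : ((q - 1 + 1 : ℕ) : ℂ) = q := by rw [Nat.sub_add_cancel hq1]
        rw [hqc, hic]; push_cast; ring
    · -- r even, 4 ≤ r
      have hr4 : 4 ≤ r := by omega
      have ha : (i - 1) / n = q := by
        have : i - 1 = n * q + (r - 1) := by omega
        rw [this, Nat.mul_add_div hn0, Nat.div_eq_of_lt (by omega), add_zero]
      have hb : (i - 3) / n = q := by
        have : i - 3 = n * q + (r - 3) := by omega
        rw [this, Nat.mul_add_div hn0, Nat.div_eq_of_lt (by omega), add_zero]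
      have hPi : stmt16P n i = 2 := by
        rw [stmt16P_def, if_neg, if_neg]
        · rw [Nat.odd_iff]; omega
        · rw [Nat.dvd_iff_mod_eq_zero, ← hr]; omega
      have hPi2 : stmt16P n (i - 2) = 2 := by
        rw [stmt16P_def, if_neg, if_neg]
        · rw [Nat.odd_iff]; omega
        · rw [Nat.dvd_iff_mod_eq_zero]
          have : i - 2 = n * q + (r - 2) := by omega
          rw [this, Nat.mul_add_mod, Nat.mod_eq_of_lt (by omega)]
          omega
      have hfi : stmt16f n i = 0 := by rw [stmt16f_def, if_neg (by omega), if_neg (by omega)]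
      rw [hPi, hPi2, hfi, if_pos (by omega), ha, hb]
      ring

/-- Orientation-reversing analogue: if `n ≥ 3` is even, `g ≥ 2`, `v ≤ 2g` and the
power sums of `λ₁,…,λ_{2g}` satisfy `pᵢ = 2 − n` when `n ∣ i`, `pᵢ = 0` when `i` is
odd, and `pᵢ = 2` otherwise, for `1 ≤ i ≤ v`, then for `1 ≤ i ≤ v`:
`sᵢ = −1` if `i ≡ 2 (mod n)`, `sᵢ = 1` if `i ≡ 0 (mod n)`, and `sᵢ = 0` otherwise. -/
theorem stmt_16 (g n v : ℕ) (hg : 2 ≤ g) (hn : 3 ≤ n) (hneven : Even n)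
    (hv : v ≤ 2 * g)
    (lam : Fin (2 * g) → ℂ)
    (p : ℕ → ℂ) (hp : ∀ i, p i = ∑ j, lam j ^ i)
    (s : ℕ → ℂ)
    (hs : ∀ h, s h = (∏ j, (Polynomial.X - Polynomial.C (lam j))).coeff (2 * g - h))
    (hpv : ∀ i, 1 ≤ i → i ≤ v →
      p i = if n ∣ i then (2 - (n : ℂ)) else if Odd i then 0 else 2) :
    ∀ i, 1 ≤ i → i ≤ v →
      s i = if i % n = 2 then -1 else if i % n = 0 then 1 else 0 := by
  have hn4 : 4 ≤ n := by obtain ⟨m, rfl⟩ := hneven; omega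
  -- Newton's identities for s
  have hmonic : (∏ j, (Polynomial.X - Polynomial.C (lam j))).Monic :=
    Polynomial.monic_prod_of_monic _ _ fun j _ => Polynomial.monic_X_sub_C (lam j)
  have hdeg : (∏ j, (Polynomial.X - Polynomial.C (lam j))).natDegree = 2 * g := by
    rw [Polynomial.natDegree_prod_of_monic _ _ fun j _ => Polynomial.monic_X_sub_C (lam j)]
    simp [Polynomial.natDegree_X_sub_C]
  have hs0 : s 0 = 1 := by
    have := hmonic.coeff_natDegree
    rw [hdeg] at this
    rw [hs 0, Nat.sub_zero, this]
  have hcard : Multiset.card (univ.val.map lam) = 2 * g := by simp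
  have hE : ∀ k, k ≤ 2 * g → s k = (-1) ^ k * aeval lam (esymm (Fin (2 * g)) ℂ k) := by
    intro k hk
    rw [hs k, aeval_esymm_eq_multiset_esymm]
    rw [Finset.prod_eq_multiset_prod]
    have h1 : univ.val.map (fun j => Polynomial.X - Polynomial.C (lam j))
        = (univ.val.map lam).map (fun t => Polynomial.X - Polynomial.C t) := by
      rw [Multiset.map_map]; rfl
    rw [h1, Multiset.prod_X_sub_C_coeff _ (by rw [hcard]; omega), hcard]
    have h2 : 2 * g - (2 * g - k) = k := by omega
    rw [h2]
  have hp' : ∀ m, aeval lam (psum (Fin (2 * g)) ℂ m) = p m := by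
    intro m
    rw [psum, map_sum, hp]
    simp
  have newton : ∀ k, 1 ≤ k → k ≤ 2 * g →
      (k : ℂ) * s k = -∑ j ∈ range k, s j * p (k - j) := by
    intro k hk1 hk2
    have hnewton := congrArg (aeval lam) (mul_esymm_eq_sum (Fin (2 * g)) ℂ k)
    simp only [map_mul, map_natCast, map_pow, map_neg, map_one, map_sum, hp'] at hnewton
    have step1 : (k : ℂ) * s k = -∑ a ∈ antidiagonal k with a.1 < k,
        (-1) ^ a.1 * aeval lam (esymm (Fin (2 * g)) ℂ a.1) * p a.2 := by
      rw [hE k hk2, show (k:ℂ) * ((-1)^k * aeval lam (esymm (Fin (2 * g)) ℂ k))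
        = (-1)^k * ((k:ℂ) * aeval lam (esymm (Fin (2 * g)) ℂ k)) by ring, hnewton, ← mul_assoc,
        ← pow_add, Odd.neg_one_pow ⟨k, by ring⟩]
      ring
    rw [step1]
    congr 1
    rw [Finset.sum_filter, Finset.Nat.sum_antidiagonal_eq_sum_range_succ_mk, Finset.sum_range_succ,
      if_neg (lt_irrefl k), add_zero]
    apply Finset.sum_congr rfl
    intro j hj
    simp only [mem_range] at hj
    rw [if_pos hj, hE j (by omega)]
  -- main induction
  have hmain : ∀ i, 1 ≤ i → i ≤ v → s i = stmt16f n i := by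
    intro i
    induction i using Nat.strong_induction_on with
    | _ i IH =>
      intro hi1 hiv
      have hne0 : (i : ℂ) ≠ 0 := Nat.cast_ne_zero.mpr (by omega)
      apply mul_left_cancel₀ hne0
      rw [newton i hi1 (by omega)]
      have hsum : ∑ j ∈ range i, s j * p (i - j)
          = ∑ j ∈ range i, stmt16f n j * stmt16P n (i - j) := by
        apply Finset.sum_congr rfl
        intro j hj
        simp only [mem_range] at hj
        have hpj : p (i - j) = stmt16P n (i - j) := by
          rw [hpv (i - j) (by omega) (by omega), stmt16P_def]
        rw [hpj]
        congr 1
        rcases Nat.eq_zero_or_pos j with h0 | h1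
        · rw [h0, hs0, stmt16f_def, Nat.zero_mod, if_neg (by omega), if_pos rfl]
        · exact IH j hj h1 (by omega)
      rw [hsum, stmt16_key n i hn4 hneven hi1]
      ring
  intro i hi1 hiv
  rw [hmain i hi1 hiv, stmt16f_def]
end
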